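/- arXiv:1505.07726 — 7 statements merged into one kernel-verified Lean document; each statement's English description precedes it below -/
import Mathlib

section
/- Let D be a set of coset representatives of GF(q)*/GF(p)* and E any nonempty subset of GF(p)* with |E| = ℓ. Then C_{ED} is a one-weight code with parameters [ℓ(q-1)/(p-1), m], every nonzero codeword having weight ℓ p^{m-1}. -/
/-!
For `x ≠ 0`, `z ↦ Tr(x z)` is a nonzero, hence surjective, linear functional onto `GF(p)`, so it
vanishes on exactly `p^(m-1)` elements of `GF(q)`. Multiplication `(c, d) ↦ c d` is a bijection
from `GF(p)^* × D` onto `GF(q)^*` and from `E × D` onto `ED`, and `Tr(x z) ≠ 0` is invariant under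
scaling `z` by `GF(p)^*`; hence the weight on `ED` is `|E|` times the weight on `D`, which is
`1/(p-1)` times the weight on all of `GF(q)`, namely `(p-1) p^(m-1)`. Positive weight of every
nonzero codeword gives injectivity of the encoding.
-/

open Finset

theorem AddMonoidHom.card_filter_eq_zero_mul_card_of_surjective {V W : Type*} [AddGroup V]
    [AddGroup W] [Fintype V] [DecidableEq W] (f : V →+ W) (hf : Function.Surjective f) :
    #{v | f v = 0} * Nat.card W = Fintype.card V := by
  have h := f.ker.card_mul_index
  rw [AddSubgroup.index_ker, AddMonoidHom.range_eq_top.2 hf, AddSubgroup.card_top,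
    Nat.card_eq_fintype_card (α := V)] at h
  rw [← h, ← Fintype.card_subtype, ← Nat.card_eq_fintype_card]
  rfl

section

variable (K : Type*) {L : Type*} [Field K] [Field L] [Algebra K L]

theorem card_filter_trace_mul_eq_zero_mul_card [Fintype K] [DecidableEq K] [Fintype L]
    {x : L} (hx : x ≠ 0) :
    #{z | Algebra.trace K L (x * z) = 0} * Fintype.card K = Fintype.card L := by
  have hT : (Algebra.trace K L).comp (LinearMap.mulLeft K x) ≠ 0 := by
    intro h
    apply Algebra.trace_ne_zero K L
    ext w
    simpa [mul_inv_cancel_left₀ hx] using LinearMap.congr_fun h (x⁻¹ * w)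
  rw [← Nat.card_eq_fintype_card]
  exact ((Algebra.trace K L).comp (LinearMap.mulLeft K x)).toAddMonoidHom
    |>.card_filter_eq_zero_mul_card_of_surjective (LinearMap.surjective_of_ne_zero hT)

theorem trace_mul_algebraMap_mul_ne_zero_iff {c : K} (hc : c ≠ 0) (x z : L) :
    Algebra.trace K L (x * (algebraMap K L c * z)) ≠ 0 ↔ Algebra.trace K L (x * z) ≠ 0 := by
  rw [mul_left_comm, ← Algebra.smul_def, map_smul, smul_eq_mul, mul_ne_zero_iff, and_iff_right hc]

def IsCosetReps (D : Finset L) : Prop :=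
  0 ∉ D ∧ ∀ z : L, z ≠ 0 → ∃! d, d ∈ D ∧ ∃ c : K, c ≠ 0 ∧ z = algebraMap K L c * d

variable {K} {D : Finset L}

theorem IsCosetReps.injOn_mul (hD : IsCosetReps K D) :
    Set.InjOn (fun cd : K × L => algebraMap K L cd.1 * cd.2) ({0}ᶜ ×ˢ D) := by
  rintro ⟨c₁, d₁⟩ ⟨hc₁, hd₁⟩ ⟨c₂, d₂⟩ ⟨hc₂, hd₂⟩ heq
  have hd₁0 : d₁ ≠ 0 := ne_of_mem_of_not_mem hd₁ hD.1
  obtain ⟨d, -, huniq⟩ := hD.2 _ (mul_ne_zero ((map_ne_zero (algebraMap K L)).2 hc₁) hd₁0)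
  obtain rfl : d₁ = d₂ :=
    (huniq d₁ ⟨hd₁, c₁, hc₁, rfl⟩).trans (huniq d₂ ⟨hd₂, c₂, hc₂, heq⟩).symm
  exact Prod.ext ((algebraMap K L).injective (mul_right_cancel₀ hd₁0 heq)) rfl

variable [DecidableEq L]

theorem image_mul_filter {C : Finset K} {P : L → Prop} [DecidablePred P]
    (hP : ∀ c ∈ C, ∀ z, P (algebraMap K L c * z) ↔ P z) :
    ((C ×ˢ D).image fun cd => algebraMap K L cd.1 * cd.2).filter P =
      (C ×ˢ D.filter P).image fun cd => algebraMap K L cd.1 * cd.2 := by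
  rw [filter_image]
  congr 1
  ext ⟨c, d⟩
  simp only [mem_filter, mem_product]
  exact ⟨fun ⟨⟨hc, hd⟩, h⟩ => ⟨hc, hd, (hP c hc d).1 h⟩,
    fun ⟨hc, hd, h⟩ => ⟨⟨hc, hd⟩, (hP c hc d).2 h⟩⟩

namespace IsCosetReps

theorem card_image_mul (hD : IsCosetReps K D) {C : Finset K} (hC : 0 ∉ C) {D' : Finset L}
    (hD' : D' ⊆ D) :
    #((C ×ˢ D').image fun cd => algebraMap K L cd.1 * cd.2) = #C * #D' := by
  rw [card_image_of_injOn, card_product]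
  refine hD.injOn_mul.mono ?_
  rintro ⟨c, d⟩ hcd
  rw [coe_product, Set.mem_prod] at hcd
  exact ⟨ne_of_mem_of_not_mem hcd.1 hC, hD' hcd.2⟩

theorem card_filter_image_mul (hD : IsCosetReps K D) {C : Finset K} (hC : 0 ∉ C)
    {P : L → Prop} [DecidablePred P] (hP : ∀ c ∈ C, ∀ z, P (algebraMap K L c * z) ↔ P z) :
    #(((C ×ˢ D).image fun cd => algebraMap K L cd.1 * cd.2).filter P) = #C * #(D.filter P) := by
  rw [image_mul_filter hP, hD.card_image_mul hC (filter_subset _ _)]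

variable [Fintype K] [DecidableEq K] [Fintype L]

theorem image_mul_compl_zero (hD : IsCosetReps K D) :
    (({0}ᶜ : Finset K) ×ˢ D).image (fun cd => algebraMap K L cd.1 * cd.2) = {0}ᶜ := by
  ext z
  simp only [mem_image, mem_product, mem_compl, mem_singleton, Prod.exists]
  constructor
  · rintro ⟨c, d, ⟨hc, hd⟩, rfl⟩
    exact mul_ne_zero ((map_ne_zero (algebraMap K L)).2 hc) (ne_of_mem_of_not_mem hd hD.1)
  · intro hz
    obtain ⟨d, ⟨hd, c, hc, rfl⟩, -⟩ := hD.2 z hz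
    exact ⟨c, d, ⟨hc, hd⟩, rfl⟩

theorem card_sub_one_mul_card_filter (hD : IsCosetReps K D) {P : L → Prop} [DecidablePred P]
    (hP : ∀ c : K, c ≠ 0 → ∀ z, P (algebraMap K L c * z) ↔ P z) (hP0 : ¬ P 0) :
    (Fintype.card K - 1) * #(D.filter P) = #{z | P z} := by
  have hC : (0 : K) ∉ ({0}ᶜ : Finset K) := by simp
  rw [show Fintype.card K - 1 = #({0}ᶜ : Finset K) by rw [card_compl, card_singleton],
    ← hD.card_filter_image_mul hC (fun c hc => hP c (by simpa using hc)),
    hD.image_mul_compl_zero]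
  congr 1
  ext z
  simp only [mem_filter, mem_compl, mem_singleton, mem_univ, true_and]
  exact ⟨fun h => h.2, fun h => ⟨fun hz => hP0 (hz ▸ h), h⟩⟩

theorem card_sub_one_mul_card (hD : IsCosetReps K D) :
    (Fintype.card K - 1) * #D = Fintype.card L - 1 := by
  have h := hD.card_sub_one_mul_card_filter (P := (· ≠ 0))
    (fun c hc z => by simp [hc]) (not_not.2 rfl)
  rwa [filter_ne', erase_eq_of_notMem hD.1, filter_ne', card_erase_of_mem (mem_univ 0),
    card_univ] at h

theorem card_filter_trace_mul_ne_zero_mul_card (hD : IsCosetReps K D) {x : L} (hx : x ≠ 0) :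
    #{d ∈ D | Algebra.trace K L (x * d) ≠ 0} * Fintype.card K = Fintype.card L := by
  have hzero := card_filter_trace_mul_eq_zero_mul_card K hx
  have hnonzero := hD.card_sub_one_mul_card_filter (P := fun z => Algebra.trace K L (x * z) ≠ 0)
    (fun c hc z => trace_mul_algebraMap_mul_ne_zero_iff K hc x z) (by simp)
  have hsplit := card_filter_add_card_filter_not (s := (univ : Finset L))
    (p := fun z => Algebra.trace K L (x * z) = 0)
  rw [card_univ] at hsplit
  have hq : 1 < Fintype.card K := Fintype.one_lt_card
  apply Nat.eq_of_mul_eq_mul_left (Nat.sub_pos_of_lt hq)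
  zify [hq.le] at hzero hnonzero hsplit ⊢
  linear_combination (Fintype.card K : ℤ) * hnonzero + (Fintype.card K : ℤ) * hsplit - hzero

end IsCosetReps

end

theorem stmt3 (p m : ℕ) [Fact p.Prime] (hm : 0 < m)
    (F : Type) [Field F] [Fintype F] [DecidableEq F] [Algebra (ZMod p) F]
    (hcard : Fintype.card F = p ^ m)
    (D : Finset F) (hD0 : (0 : F) ∉ D)
    (hrep : ∀ z : F, z ≠ 0 →
      ∃! d, d ∈ D ∧ ∃ c : ZMod p, c ≠ 0 ∧ z = algebraMap (ZMod p) F c * d)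
    (E : Finset (ZMod p)) (hE0 : (0 : ZMod p) ∉ E) (hEne : E.Nonempty)
    (ED : Finset F)
    (hED : ED = (E ×ˢ D).image fun ed => algebraMap (ZMod p) F ed.1 * ed.2) :
    (p - 1) * ED.card = E.card * (p ^ m - 1) ∧
    Function.Injective (fun x : F => fun d : ED => Algebra.trace (ZMod p) F (x * d.1)) ∧
    ∀ x : F, x ≠ 0 →
      (ED.filter fun d => Algebra.trace (ZMod p) F (x * d) ≠ 0).card
        = E.card * p ^ (m - 1) := by
  have hD : IsCosetReps (ZMod p) D := ⟨hD0, hrep⟩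
  have hweight : ∀ x : F, x ≠ 0 →
      #{d ∈ ED | Algebra.trace (ZMod p) F (x * d) ≠ 0} = #E * p ^ (m - 1) := by
    intro x hx
    have hDx := hD.card_filter_trace_mul_ne_zero_mul_card hx
    rw [ZMod.card, hcard, ← pow_sub_one_mul hm.ne'] at hDx
    rw [hED, hD.card_filter_image_mul hE0
      (fun c hc => trace_mul_algebraMap_mul_ne_zero_iff _ (ne_of_mem_of_not_mem hc hE0) x),
      Nat.eq_of_mul_eq_mul_right (Fact.out : p.Prime).pos hDx]
  refine ⟨?_, fun x y hxy => ?_, hweight⟩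
  · have hDcard := hD.card_sub_one_mul_card
    rw [ZMod.card, hcard] at hDcard
    rw [hED, hD.card_image_mul hE0 subset_rfl, mul_left_comm, hDcard]
  · by_contra hne
    have hpos : 0 < #{d ∈ ED | Algebra.trace (ZMod p) F ((x - y) * d) ≠ 0} := by
      rw [hweight _ (sub_ne_zero.2 hne)]
      exact Nat.mul_pos (card_pos.2 hEne) (pow_pos (Fact.out : p.Prime).pos _)
    obtain ⟨d, hd⟩ := card_pos.1 hpos
    rw [mem_filter] at hd
    exact hd.2 (by rw [sub_mul, map_sub, sub_eq_zero]; exact congrFun hxy ⟨d, hd.1⟩)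
end

section
/- Let D ⊂ GF(q) and suppose C_D has dimension m and max nonzero codeword weight strictly less than (p-1)p^{m-1}. Then C_{D̄}, where D̄ = GF(q) \ D, also has dimension m, length q - |D|, and for each x ∈ GF(q)*, the weight of the codeword in C_{D̄} equals (p-1)p^{m-1} minus the weight of the codeword c_x in C_D. -/
/-! For `x ≠ 0` the functional `d ↦ Tr(x d)` on `GF(q)` is nonzero, hence vanishes on exactly
`p^(m-1)` points, so the full codeword `c_x` has weight `(p-1)p^(m-1)`; its weights on `D` and on
`D̄` add up to that. If `x ≠ y` gave the same codeword on `D̄`, then `c_{x-y}` would vanish on `D̄`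
and so have full weight on `D`, contradicting the bound on the weights of `C_D`. -/

open Finset

theorem Finset.card_filter_add_card_filter_compl {α : Type*} [Fintype α] [DecidableEq α]
    (s : Finset α) (P : α → Prop) [DecidablePred P] :
    #(s.filter P) + #(sᶜ.filter P) = #(univ.filter P) := by
  rw [← card_union_of_disjoint (disjoint_filter_filter disjoint_compl_right), ← filter_union,
    union_compl]

theorem LinearMap.card_filter_ne_zero_mul_card {K V : Type*} [Field K] [Fintype K] [DecidableEq K]
    [AddCommGroup V] [Module K V] [Fintype V] (f : V →ₗ[K] K) (hf : f ≠ 0) :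
    #{v | f v ≠ 0} * Fintype.card K = (Fintype.card K - 1) * Fintype.card V := by
  have hquot : Nat.card (V ⧸ ker f) = Fintype.card K := by
    rw [Nat.card_congr (f.quotKerEquivOfSurjective (surjective_of_ne_zero hf)).toEquiv,
      Nat.card_eq_fintype_card]
  have hV : Fintype.card V = Nat.card (ker f) * Fintype.card K := by
    rw [← Nat.card_eq_fintype_card, (ker f).card_eq_card_quotient_mul_card, hquot]
  have hker : #{v | f v = 0} = Nat.card (ker f) := by
    rw [← Fintype.card_subtype, ← Nat.card_eq_fintype_card]
    rfl
  have hsplit := card_filter_add_card_filter_not (s := (univ : Finset V)) (fun v => f v = 0)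
  rw [card_univ, hker] at hsplit
  have hne : #{v | f v ≠ 0} = Nat.card (ker f) * (Fintype.card K - 1) := by
    rw [Nat.mul_sub_one, ← hV]
    simp only [ne_eq]
    omega
  rw [hne, hV]
  ring

theorem Algebra.trace_comp_mulLeft_ne_zero (K : Type*) {L : Type*} [Field K] [Field L]
    [Algebra K L] [FiniteDimensional K L] [Algebra.IsSeparable K L] {x : L} (hx : x ≠ 0) :
    (Algebra.trace K L).comp (LinearMap.mulLeft K x) ≠ 0 := by
  obtain ⟨y, hy⟩ := Algebra.trace_surjective K L 1
  intro h
  simpa [hx, hy] using LinearMap.congr_fun h (x⁻¹ * y)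

theorem card_filter_trace_mul_ne_zero_mul_card (K : Type*) {L : Type*} [Field K] [Fintype K]
    [DecidableEq K] [Field L] [Fintype L] [Algebra K L] {x : L} (hx : x ≠ 0) :
    #{d : L | Algebra.trace K L (x * d) ≠ 0} * Fintype.card K
      = (Fintype.card K - 1) * Fintype.card L :=
  have : FiniteDimensional K L := Module.Finite.of_finite
  LinearMap.card_filter_ne_zero_mul_card _ (Algebra.trace_comp_mulLeft_ne_zero K hx)

theorem card_filter_trace_mul_ne_zero (p m : ℕ) [Fact p.Prime] {F : Type*} [Field F] [Fintype F]
    [Algebra (ZMod p) F] (hcard : Fintype.card F = p ^ m) {x : F} (hx : x ≠ 0) :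
    #{d : F | Algebra.trace (ZMod p) F (x * d) ≠ 0} = (p - 1) * p ^ (m - 1) := by
  obtain ⟨n, rfl⟩ : ∃ n, m = n + 1 := Nat.exists_eq_succ_of_ne_zero <| by
    rintro rfl
    exact (Fintype.one_lt_card (α := F)).ne' (by rw [hcard, pow_zero])
  have h := card_filter_trace_mul_ne_zero_mul_card (ZMod p) hx
  rw [ZMod.card, hcard] at h
  refine Nat.eq_of_mul_eq_mul_right (Fact.out : p.Prime).pos ?_
  rw [h, Nat.add_sub_cancel, pow_succ]
  ring

theorem stmt6_general (p m : ℕ) [Fact p.Prime]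
    (F : Type) [Field F] [Fintype F] [DecidableEq F] [Algebra (ZMod p) F]
    (hcard : Fintype.card F = p ^ m)
    (D : Finset F)
    (hmax : ∀ x : F, x ≠ 0 →
      (D.filter fun d => Algebra.trace (ZMod p) F (x * d) ≠ 0).card
        < (p - 1) * p ^ (m - 1)) :
    Dᶜ.card = p ^ m - D.card ∧
    Function.Injective
      (fun x : F => fun d : (Dᶜ : Finset F) => Algebra.trace (ZMod p) F (x * d.1)) ∧
    ∀ x : F, x ≠ 0 →
      (Dᶜ.filter fun d => Algebra.trace (ZMod p) F (x * d) ≠ 0).card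
        = (p - 1) * p ^ (m - 1)
          - (D.filter fun d => Algebra.trace (ZMod p) F (x * d) ≠ 0).card := by
  have hsplit (x : F) (hx : x ≠ 0) := (card_filter_add_card_filter_compl D
    fun d => Algebra.trace (ZMod p) F (x * d) ≠ 0).trans (card_filter_trace_mul_ne_zero p m hcard hx)
  refine ⟨by rw [card_compl, hcard], fun x y hxy => ?_, fun x hx => by have := hsplit x hx; omega⟩
  by_contra hne
  have hsub : x - y ≠ 0 := sub_ne_zero.mpr hne
  have hzero : (Dᶜ.filter fun d => Algebra.trace (ZMod p) F ((x - y) * d) ≠ 0) = ∅ := by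
    refine filter_eq_empty_iff.mpr fun d hd => not_not.mpr ?_
    rw [sub_mul, map_sub, sub_eq_zero]
    exact congrFun hxy ⟨d, hd⟩
  have := hsplit (x - y) hsub
  rw [hzero, card_empty, add_zero] at this
  exact (hmax (x - y) hsub).ne this

theorem stmt6 (p m : ℕ) [Fact p.Prime] (hm : 0 < m)
    (F : Type) [Field F] [Fintype F] [DecidableEq F] [Algebra (ZMod p) F]
    (hcard : Fintype.card F = p ^ m)
    (D : Finset F)
    (hdim : Function.Injective
      (fun x : F => fun d : D => Algebra.trace (ZMod p) F (x * d.1)))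
    (hmax : ∀ x : F, x ≠ 0 →
      (D.filter fun d => Algebra.trace (ZMod p) F (x * d) ≠ 0).card
        < (p - 1) * p ^ (m - 1)) :
    Dᶜ.card = p ^ m - D.card ∧
    Function.Injective
      (fun x : F => fun d : (Dᶜ : Finset F) => Algebra.trace (ZMod p) F (x * d.1)) ∧
    ∀ x : F, x ≠ 0 →
      (Dᶜ.filter fun d => Algebra.trace (ZMod p) F (x * d) ≠ 0).card
        = (p - 1) * p ^ (m - 1)
          - (D.filter fun d => Algebra.trace (ZMod p) F (x * d) ≠ 0).card :=
  stmt6_general p m F hcard D hmax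
end

section
/- Let q = 2^m with m odd. Then Σ_{x ∈ GF(q)} (-1)^{Tr(x^3 + x)} = (-1)^{(m²-1)/8} · 2^{(m+1)/2}, where Tr is the trace from GF(2^m) to GF(2). -/
/-!
Write `ψ x = (-1) ^ Tr x` and `S = ∑ ψ (x ^ 3 + x)`. Substituting `y = x + z` in `S ^ 2` and using
`Tr (x z²) = Tr (x² z⁴)` turns the inner sum into `∑ₓ ψ (x² (z + z⁴))`, which vanishes unless
`z⁴ = z`; as `3 ∤ 2 ^ m - 1` this leaves `z ∈ {0, 1}`, so `S ^ 2 = 2 ^ (m + 1)`.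
The sign is fixed modulo `5`: `y² + y = c` has `1 + ψ c` solutions, so the elliptic curve
`y² + y = x³ + x` has `2 ^ m + 1 + S` points, and `(0, 0)` has order `5` on it.
Hence `5 ∣ 2 ^ m + 1 + S`, which rules out the wrong sign.
-/

open Finset

namespace Carlitz

lemma card_filter_sq_add_self_eq_le_two {F : Type*} [Field F] [Fintype F] [DecidableEq F] (c : F) :
    #{y : F | y ^ 2 + y = c} ≤ 2 := by
  by_cases h : ∃ y₀, y₀ ^ 2 + y₀ = c
  · obtain ⟨y₀, rfl⟩ := h
    calc #{y : F | y ^ 2 + y = y₀ ^ 2 + y₀} ≤ #({y₀, -y₀ - 1} : Finset F) := by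
          refine card_le_card fun y hy => ?_
          have hy : (y - y₀) * (y - (-y₀ - 1)) = 0 := by
            linear_combination (mem_filter.mp hy).2
          rcases mul_eq_zero.mp hy with h | h
          · simp [sub_eq_zero.mp h]
          · simp [sub_eq_zero.mp h]
      _ ≤ 2 := card_le_two
  · simp only [not_exists] at h
    simp [filter_false_of_mem fun y _ => h y]

section TraceCharacter

variable {F : Type*} [Field F] [Algebra (ZMod 2) F]

noncomputable def traceChar : AddChar F ℤ where
  toFun x := (-1) ^ (Algebra.trace (ZMod 2) F x).val
  map_zero_eq_one' := by simp
  map_add_eq_mul' x y := by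
    rw [map_add]
    generalize Algebra.trace (ZMod 2) F x = a
    generalize Algebra.trace (ZMod 2) F y = b
    revert a b
    decide

lemma traceChar_apply (x : F) : traceChar x = (-1) ^ (Algebra.trace (ZMod 2) F x).val := rfl

lemma traceChar_eq_one_or_eq_neg_one (x : F) : traceChar x = 1 ∨ traceChar x = -1 :=
  neg_one_pow_eq_or ℤ _

lemma traceChar_one (hF : Odd (Module.finrank (ZMod 2) F)) : traceChar (1 : F) = -1 := by
  have : Algebra.trace (ZMod 2) F 1 = 1 := by
    rw [← map_one (algebraMap (ZMod 2) F), Algebra.trace_algebraMap, nsmul_one,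
      (ZMod.natCast_eq_one_iff_odd).mpr hF]
  rw [traceChar_apply, this]
  rfl

lemma traceChar_ne_one (hF : Odd (Module.finrank (ZMod 2) F)) : (traceChar : AddChar F ℤ) ≠ 1 :=
  fun h => absurd (traceChar_one hF) (by rw [h, AddChar.one_apply]; decide)

lemma isPrimitive_traceChar (hF : Odd (Module.finrank (ZMod 2) F)) :
    (traceChar : AddChar F ℤ).IsPrimitive := by
  intro a ha h
  have := DFunLike.congr_fun h a⁻¹
  rw [AddChar.mulShift_apply, mul_inv_cancel₀ ha, traceChar_one hF, AddChar.one_apply] at this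
  exact absurd this (by decide)

variable [Fintype F]

lemma trace_sq (x : F) : Algebra.trace (ZMod 2) F (x ^ 2) = Algebra.trace (ZMod 2) F x := by
  simpa using Algebra.trace_eq_of_algEquiv (FiniteField.frobeniusAlgEquivOfAlgebraic (ZMod 2) F) x

lemma traceChar_sq (x : F) : traceChar (x ^ 2) = traceChar x := by
  rw [traceChar_apply, traceChar_apply, trace_sq]

lemma traceChar_sq_add_self (y : F) : traceChar (y ^ 2 + y) = 1 := by
  rw [AddChar.map_add_eq_mul, traceChar_sq, traceChar_apply, ← pow_add, ← two_mul, pow_mul]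
  simp

lemma card_filter_sq_add_self_eq (hF : Odd (Module.finrank (ZMod 2) F)) [DecidableEq F] (c : F) :
    (#{y : F | y ^ 2 + y = c} : ℤ) = 1 + traceChar c := by
  -- Solvability when `Tr c = 0` comes for free: pointwise `≤` with equal totals forces `=`.
  have hle : ∀ c : F, (#{y : F | y ^ 2 + y = c} : ℤ) ≤ 1 + traceChar c := by
    intro c
    rcases traceChar_eq_one_or_eq_neg_one c with h | h
    · rw [h]; exact_mod_cast card_filter_sq_add_self_eq_le_two c
    · rw [h, add_neg_cancel, Nat.cast_nonpos, card_eq_zero, filter_eq_empty_iff]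
      rintro y - rfl
      rw [traceChar_sq_add_self] at h
      exact absurd h (by decide)
  have hsum : ∑ c : F, (#{y : F | y ^ 2 + y = c} : ℤ) = ∑ c : F, (1 + traceChar c) := by
    rw [sum_add_distrib, AddChar.sum_eq_zero_of_ne_one (traceChar_ne_one hF), add_zero,
      sum_const, card_univ, nsmul_one]
    have hfib : #(univ : Finset F) = ∑ c : F, #{y : F | y ^ 2 + y = c} :=
      card_eq_sum_card_fiberwise fun y _ => mem_coe.mpr (mem_univ (y ^ 2 + y))
    rw [card_univ] at hfib
    rw [hfib, Nat.cast_sum]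
  exact (sum_eq_sum_iff_of_le fun c _ => hle c).mp hsum c (mem_univ c)

lemma card_filter_prod_sq_add_self_eq (hF : Odd (Module.finrank (ZMod 2) F)) [DecidableEq F]
    (f : F → F) :
    (#{p : F × F | p.2 ^ 2 + p.2 = f p.1} : ℤ) = Fintype.card F + ∑ x : F, traceChar (f x) := by
  have hfib : #{p : F × F | p.2 ^ 2 + p.2 = f p.1} = ∑ x : F, #{y : F | y ^ 2 + y = f x} := by
    simp only [card_filter, Fintype.sum_prod_type]
  rw [hfib, Nat.cast_sum]
  simp only [card_filter_sq_add_self_eq hF, sum_add_distrib, sum_const, card_univ, nsmul_one]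

lemma bijective_sq : Function.Bijective fun x : F => x ^ 2 := by
  simpa using (FiniteField.frobeniusAlgEquivOfAlgebraic (ZMod 2) F).bijective

lemma sum_traceChar_sq_mul (hF : Odd (Module.finrank (ZMod 2) F)) [DecidableEq F] (c : F) :
    ∑ x : F, traceChar (x ^ 2 * c) = if c = 0 then (Fintype.card F : ℤ) else 0 := by
  rw [Fintype.sum_bijective _ bijective_sq _ (fun u => traceChar (u * c)) fun _ => rfl]
  exact_mod_cast AddChar.sum_mulShift c (isPrimitive_traceChar hF)

end TraceCharacter

lemma eq_one_of_pow_three_eq_one {K : Type*} [Field K] [Fintype K]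
    (hK : ¬ 3 ∣ Fintype.card K - 1) {z : K} (hz : z ^ 3 = 1) : z = 1 := by
  have hz0 : z ≠ 0 := by rintro rfl; simp at hz
  have hcop : Nat.gcd 3 (Fintype.card K - 1) = 1 :=
    (Nat.Prime.coprime_iff_not_dvd Nat.prime_three).mpr hK
  simpa [hcop] using pow_gcd_eq_one.mpr ⟨hz, FiniteField.pow_card_sub_one_eq_one z hz0⟩

lemma not_three_dvd_two_pow_sub_one {m : ℕ} (hm : Odd m) : ¬ 3 ∣ 2 ^ m - 1 := by
  obtain ⟨k, rfl⟩ := hm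
  have : 4 ^ k % 3 = 1 := by rw [Nat.pow_mod]; simp
  rw [pow_succ, pow_mul]
  norm_num
  omega

lemma filter_add_pow_four_eq_zero {K : Type*} [Field K] [Fintype K] [DecidableEq K] [CharP K 2]
    (hK : ¬ 3 ∣ Fintype.card K - 1) : ({z : K | z + z ^ 4 = 0} : Finset K) = {0, 1} := by
  ext z
  simp only [mem_filter, mem_univ, true_and, mem_insert, mem_singleton]
  refine ⟨fun h => ?_, ?_⟩
  · have : z * (z ^ 3 - 1) = 0 := by
      linear_combination h - z * (CharTwo.two_eq_zero : (2 : K) = 0)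
    rcases mul_eq_zero.mp this with h0 | h1
    · exact .inl h0
    · exact .inr (eq_one_of_pow_three_eq_one hK (sub_eq_zero.mp h1))
  · rintro (rfl | rfl)
    · simp
    · linear_combination (CharTwo.two_eq_zero : (2 : K) = 0)

section CubeSum

variable {F : Type*} [Field F] [Fintype F] [Algebra (ZMod 2) F]

lemma traceChar_mul_traceChar_add (x z : F) :
    traceChar (x ^ 3 + x) * traceChar ((x + z) ^ 3 + (x + z)) =
      traceChar (z ^ 3 + z) * traceChar (x ^ 2 * (z + z ^ 4)) := by
  have := charP_of_injective_algebraMap' (A := F) (ZMod 2) 2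
  calc traceChar (x ^ 3 + x) * traceChar ((x + z) ^ 3 + (x + z))
      = traceChar (z ^ 3 + z + x ^ 2 * z + x * z ^ 2) := by
        rw [← AddChar.map_add_eq_mul]
        congr 1
        linear_combination
          (x ^ 3 + x ^ 2 * z + x * z ^ 2 + x) * (CharTwo.two_eq_zero : (2 : F) = 0)
    _ = traceChar (z ^ 3 + z) * (traceChar (x ^ 2 * z) * traceChar ((x * z ^ 2) ^ 2)) := by
        rw [traceChar_sq, ← AddChar.map_add_eq_mul, ← AddChar.map_add_eq_mul, add_assoc]
    _ = traceChar (z ^ 3 + z) * traceChar (x ^ 2 * (z + z ^ 4)) := by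
        rw [← AddChar.map_add_eq_mul]
        congr 2
        ring

lemma sum_traceChar_cube_add_self_sq (hF : Odd (Module.finrank (ZMod 2) F)) :
    (∑ x : F, traceChar (x ^ 3 + x)) ^ 2 = 2 * Fintype.card F := by
  classical
  have := charP_of_injective_algebraMap' (A := F) (ZMod 2) 2
  have hK : ¬ 3 ∣ Fintype.card F - 1 := by
    rw [Module.card_eq_pow_finrank (K := ZMod 2), ZMod.card]
    exact not_three_dvd_two_pow_sub_one hF
  calc (∑ x : F, traceChar (x ^ 3 + x)) ^ 2
      = ∑ x : F, ∑ z : F, traceChar (x ^ 3 + x) * traceChar ((x + z) ^ 3 + (x + z)) := by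
        rw [sq, sum_mul_sum]
        exact sum_congr rfl fun x _ => (Fintype.sum_equiv (Equiv.addLeft x) _ _ fun _ => rfl).symm
    _ = ∑ z : F, traceChar (z ^ 3 + z) * ∑ x : F, traceChar (x ^ 2 * (z + z ^ 4)) := by
        rw [sum_comm]
        simp only [traceChar_mul_traceChar_add, mul_sum]
    _ = ∑ z ∈ ({z : F | z + z ^ 4 = 0} : Finset F), traceChar (z ^ 3 + z) * Fintype.card F := by
        simp only [sum_traceChar_sq_mul hF, mul_ite, mul_zero, sum_filter]
    _ = 2 * Fintype.card F := by
        rw [filter_add_pow_four_eq_zero hK, sum_pair zero_ne_one, one_pow,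
          CharTwo.add_self_eq_zero, zero_pow three_ne_zero, add_zero, AddChar.map_zero_eq_one]
        ring

end CubeSum

section Curve

open WeierstrassCurve WeierstrassCurve.Affine

variable (F : Type*) [Field F]

def carlitzCurve : WeierstrassCurve.Affine F := { a₁ := 0, a₂ := 0, a₃ := 1, a₄ := 1, a₆ := 0 }

variable {F}

lemma carlitzCurve_equation_iff (x y : F) :
    (carlitzCurve F).Equation x y ↔ y ^ 2 + y = x ^ 3 + x := by
  simp [equation_iff, carlitzCurve]

variable [CharP F 2]

lemma carlitzCurve_Δ : (carlitzCurve F).Δ = 1 := by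
  simp only [carlitzCurve, Δ, b₂, b₄, b₆, b₈]
  linear_combination (-46 : F) * (CharTwo.two_eq_zero : (2 : F) = 0)

instance : (carlitzCurve F).IsElliptic := ⟨carlitzCurve_Δ (F := F) ▸ isUnit_one⟩

lemma carlitzCurve_nonsingular {x y : F} (h : y ^ 2 + y = x ^ 3 + x) :
    (carlitzCurve F).Nonsingular x y :=
  equation_iff_nonsingular.mp ((carlitzCurve_equation_iff x y).mpr h)

lemma carlitzCurve_negY (x y : F) : (carlitzCurve F).negY x y = y + 1 := by
  simp [negY, carlitzCurve, CharTwo.sub_eq_add, CharTwo.neg_eq]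

variable [DecidableEq F]

lemma addOrderOf_carlitzCurve_point :
    addOrderOf (Point.some 0 0 (carlitzCurve_nonsingular (F := F) (by ring))) = 5 := by
  have h2 : (2 : F) = 0 := CharTwo.two_eq_zero
  set P : (carlitzCurve F).Point := .some 0 0 (carlitzCurve_nonsingular (by ring))
  set Q : (carlitzCurve F).Point := .some 1 0 (carlitzCurve_nonsingular (by linear_combination -h2))
  have hPQ : P + P = Q := by
    rw [Point.add_self_of_Y_ne (by rw [carlitzCurve_negY]; simp), Point.some.injEq]
    simp [addX, addY, negAddY, Affine.slope, carlitzCurve]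
    linear_combination -h2
  have hQP : Q + Q = -P := by
    rw [Point.add_self_of_Y_ne (by rw [carlitzCurve_negY]; simp), Point.neg_some, Point.some.injEq]
    simp [addX, addY, negAddY, Affine.slope, carlitzCurve]
    exact ⟨by linear_combination 7 * h2, .inl (by linear_combination 2 * h2)⟩
  have h5 : 5 • P = 0 := by
    rw [show 5 • P = (P + P) + (P + P) + P by abel, hPQ, hQP, neg_add_cancel]
  have : Fact (Nat.Prime 5) := ⟨by norm_num⟩
  exact addOrderOf_eq_prime h5 (Point.some_ne_zero _)

lemma five_dvd_natCard_carlitzCurve_point : 5 ∣ Nat.card (carlitzCurve F).Point :=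
  addOrderOf_carlitzCurve_point (F := F) ▸ addOrderOf_dvd_natCard _

lemma natCard_carlitzCurve_point [Fintype F] :
    Nat.card (carlitzCurve F).Point = #{p : F × F | p.2 ^ 2 + p.2 = p.1 ^ 3 + p.1} + 1 := by
  classical
  rw [Nat.card_congr (pointEquiv (carlitzCurve F)), WithZero, Finite.card_option]
  simp only [carlitzCurve_equation_iff, Nat.card_eq_fintype_card, Fintype.card_subtype]

end Curve

def carlitzValue (m : ℕ) : ℤ := (-1) ^ ((m ^ 2 - 1) / 8) * 2 ^ ((m + 1) / 2)

lemma carlitzValue_sq {m : ℕ} (hm : Odd m) : carlitzValue m ^ 2 = 2 * 2 ^ m := by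
  have h : (m + 1) / 2 * 2 = m + 1 := Nat.div_mul_cancel hm.add_one.two_dvd
  rw [carlitzValue, mul_pow, ← pow_mul, ← pow_mul, h, mul_comm _ 2, pow_mul, neg_one_sq, one_pow,
    one_mul, pow_succ, mul_comm]

lemma carlitzValue_add_eight {m : ℕ} (hm : 1 ≤ m) : carlitzValue (m + 8) = 16 * carlitzValue m := by
  have hexp : ((m + 8) ^ 2 - 1) / 8 = (m ^ 2 - 1) / 8 + 2 * (m + 4) := by
    have : (m + 8) ^ 2 = m ^ 2 + 16 * m + 64 := by ring
    have : 1 ≤ m ^ 2 := Nat.one_le_pow _ _ hm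
    omega
  have hhalf : (m + 8 + 1) / 2 = (m + 1) / 2 + 4 := by omega
  rw [carlitzValue, carlitzValue, hexp, hhalf, pow_add, pow_mul, neg_one_sq, one_pow, mul_one,
    pow_add]
  ring

lemma five_dvd_two_pow_add_carlitzValue_add_one {m : ℕ} (hm : Odd m) :
    (5 : ℤ) ∣ 2 ^ m + carlitzValue m + 1 := by
  induction m using Nat.strong_induction_on with
  | _ m ih =>
    rcases lt_or_ge m 8 with hlt | hge
    · interval_cases m
      all_goals first | exact absurd hm (by decide) | norm_num [carlitzValue]
    · obtain ⟨n, rfl⟩ := Nat.exists_eq_add_of_le' hge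
      have hn : Odd n := (Nat.odd_add.mp hm).mpr (by decide)
      have hstep : 2 ^ (n + 8) + carlitzValue (n + 8) + 1 =
          (2 ^ n + carlitzValue n + 1) + 5 * (51 * 2 ^ n + 3 * carlitzValue n) := by
        rw [pow_add, carlitzValue_add_eight hn.pos]
        ring
      rw [hstep]
      exact dvd_add (ih n (by omega) hn) (dvd_mul_right _ _)

lemma eq_carlitzValue_of_sq_eq {m : ℕ} (hm : Odd m) {S : ℤ} (hS : S ^ 2 = 2 * 2 ^ m)
    (h5 : (5 : ℤ) ∣ 2 ^ m + S + 1) : S = carlitzValue m := by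
  refine (sq_eq_sq_iff_eq_or_eq_neg.mp (hS.trans (carlitzValue_sq hm).symm)).resolve_right ?_
  intro hneg
  have h2R : (5 : ℤ) ∣ 2 * carlitzValue m := by
    have : 2 * carlitzValue m = (2 ^ m + carlitzValue m + 1) - (2 ^ m + S + 1) := by
      rw [hneg]
      ring
    rw [this]
    exact dvd_sub (five_dvd_two_pow_add_carlitzValue_add_one hm) h5
  have h5pow : (5 : ℤ) ∣ 2 ^ (m + 3) := by
    have : (2 * carlitzValue m) ^ 2 = 2 ^ (m + 3) := by rw [mul_pow, carlitzValue_sq hm]; ring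
    exact this ▸ dvd_pow h2R two_ne_zero
  have := (by norm_num : Prime (5 : ℤ)).dvd_of_dvd_pow h5pow
  norm_num at this

end Carlitz

open Carlitz in
theorem stmt7 (m : ℕ) (hm : Odd m)
    (F : Type) [Field F] [Fintype F] [Algebra (ZMod 2) F]
    (hcard : Fintype.card F = 2 ^ m) :
    ∑ x : F, (-1 : ℤ) ^ (Algebra.trace (ZMod 2) F (x ^ 3 + x)).val
      = (-1 : ℤ) ^ ((m ^ 2 - 1) / 8) * 2 ^ ((m + 1) / 2) := by
  classical
  have hfinrank : Module.finrank (ZMod 2) F = m := by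
    have := Module.card_eq_pow_finrank (K := ZMod 2) (V := F)
    rw [hcard, ZMod.card] at this
    exact (Nat.pow_right_injective le_rfl this).symm
  have hF : Odd (Module.finrank (ZMod 2) F) := hfinrank ▸ hm
  have := charP_of_injective_algebraMap' (A := F) (ZMod 2) 2
  have hsq := sum_traceChar_cube_add_self_sq hF
  have hpoints : (5 : ℤ) ∣ #{p : F × F | p.2 ^ 2 + p.2 = p.1 ^ 3 + p.1} + 1 := by
    exact_mod_cast natCard_carlitzCurve_point (F := F) ▸ five_dvd_natCard_carlitzCurve_point
  rw [card_filter_prod_sq_add_self_eq hF (fun x => x ^ 3 + x), hcard] at hpoints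
  rw [hcard] at hsq
  push_cast at hsq hpoints
  exact eq_carlitzValue_of_sq_eq hm hsq hpoints
end

section
/- Let q = 2^m with m ≥ 4 even. Then S(1,1) = Σ_{x ∈ GF(q)} (-1)^{Tr(x^3 + x)} equals 0 if m ≡ 2 (mod 4), and equals -(-1)^{m/4} · 2^{m/2 + 1} if m ≡ 0 (mod 4). -/
/-!
Write `q = 4 ^ n`, let `K = GF(2 ^ n)` be the fixed field of `x ↦ x ^ 2 ^ n` in `F` and
`Tr_{F/K} x = x + x ^ 2 ^ n`, so that `Tr_F = Tr_K ∘ Tr_{F/K}`. On `K` the summand is `1`.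
Fixing `z` with `Tr_{F/K} z = 1`, every `x ∉ K` is uniquely `T (z + k)` with
`T = Tr_{F/K} x ∈ Kˣ` and `k ∈ K`, and then `Tr_{F/K} (x ^ 3 + x) = T ^ 3 (k ^ 2 + k) + const`.
As `k ↦ Tr_K (c (k ^ 2 + k))` is the linear form `k ↦ Tr_K ((√c + c) k)`, the sum over `k`
vanishes unless `T ^ 3 = 1`, whence `S = 2 ^ n - 2 ^ n ∑_{T ∈ K, T ^ 3 = 1} (-1) ^ Tr_K (1 + T)`.
The nontrivial cube roots of unity lie in `K` exactly when `n` is even, which gives both cases.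
-/

open Finset Polynomial

namespace CharTwoTrace

variable {F : Type*} [Field F]

-- On the subfield `{x | x ^ 2 ^ n = x} ≅ GF(2 ^ n)`, `traceSum n` is the absolute trace, with
-- values in `{0, 1} ⊆ F`, and `traceSign n x = (-1) ^ traceSum n x`.
def traceSum (n : ℕ) (x : F) : F := ∑ i ∈ range n, x ^ 2 ^ i

def relTrace (n : ℕ) (x : F) : F := x + x ^ 2 ^ n

open Classical in
noncomputable def traceSign (n : ℕ) (x : F) : ℤ := if traceSum n x = 0 then 1 else -1

lemma traceSum_zero (n : ℕ) : traceSum n (0 : F) = 0 :=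
  sum_eq_zero fun _ _ => zero_pow (pow_ne_zero _ two_ne_zero)

lemma traceSum_one (n : ℕ) : traceSum n (1 : F) = n := by
  simp [traceSum]

lemma traceSign_zero (n : ℕ) : traceSign n (0 : F) = 1 := by
  simp [traceSign, traceSum_zero]

lemma traceSign_of_traceSum_eq_one {n : ℕ} {x : F} (hx : traceSum n x = 1) :
    traceSign n x = -1 := by
  simp [traceSign, hx]

section CharTwo

variable [CharP F 2]

lemma traceSum_add (n : ℕ) (x y : F) : traceSum n (x + y) = traceSum n x + traceSum n y := by
  simp only [traceSum, add_pow_char_pow, sum_add_distrib]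

lemma traceSum_sq (n : ℕ) (x : F) : traceSum n (x ^ 2) = traceSum n x ^ 2 := by
  simp only [traceSum, sum_pow_char, ← pow_mul, mul_comm]

lemma traceSum_sq_add_self (n : ℕ) (x : F) : traceSum n (x ^ 2 + x) = relTrace n x := by
  have h : ∀ i, (x ^ 2 + x) ^ 2 ^ i = x ^ 2 ^ (i + 1) - x ^ 2 ^ i := fun i => by
    rw [CharTwo.sub_eq_add, add_pow_char_pow, ← pow_mul, pow_succ']
  rw [traceSum, sum_congr rfl fun i _ => h i, sum_range_sub (fun i => x ^ 2 ^ i), relTrace,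
    CharTwo.sub_eq_add, pow_zero, pow_one, add_comm]

lemma traceSum_two_mul (n : ℕ) (x : F) : traceSum (2 * n) x = traceSum n (relTrace n x) := by
  rw [relTrace, traceSum_add, two_mul, traceSum, sum_range_add]
  congr 1
  exact sum_congr rfl fun i _ => by rw [← pow_mul, ← pow_add]

lemma relTrace_add (n : ℕ) (x y : F) : relTrace n (x + y) = relTrace n x + relTrace n y := by
  simp only [relTrace, add_pow_char_pow]
  ring

lemma relTrace_sq (n : ℕ) (x : F) : relTrace n (x ^ 2) = relTrace n x ^ 2 := by
  rw [relTrace, relTrace, add_pow_char, pow_right_comm]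

lemma traceSign_two_mul (n : ℕ) (x : F) : traceSign (2 * n) x = traceSign n (relTrace n x) := by
  rw [traceSign, traceSign, traceSum_two_mul]

end CharTwo

section FixedField

variable [Fintype F]

lemma ne_zero_of_card_eq_two_pow_two_mul {n : ℕ} (hF : Fintype.card F = 2 ^ (2 * n)) :
    n ≠ 0 := by
  rintro rfl
  simpa [hF] using (Fintype.one_lt_card : 1 < Fintype.card F)

variable [DecidableEq F]

variable (F) in
def frobFixed (n : ℕ) : Finset F := univ.filter fun x => x ^ 2 ^ n = x

variable {n : ℕ} {x y : F}

@[simp]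
lemma mem_frobFixed : x ∈ frobFixed F n ↔ x ^ 2 ^ n = x := by
  simp [frobFixed]

lemma one_mem_frobFixed : (1 : F) ∈ frobFixed F n := by
  simp

lemma mul_mem_frobFixed (hx : x ∈ frobFixed F n) (hy : y ∈ frobFixed F n) :
    x * y ∈ frobFixed F n := by
  simp_all [mul_pow]

lemma pow_mem_frobFixed (hx : x ∈ frobFixed F n) (k : ℕ) : x ^ k ∈ frobFixed F n := by
  rw [mem_frobFixed, ← pow_mul, mul_comm, pow_mul, mem_frobFixed.1 hx]

lemma inv_mem_frobFixed (hx : x ∈ frobFixed F n) : x⁻¹ ∈ frobFixed F n := by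
  simp_all [inv_pow]

lemma relTrace_mul_of_mem (hx : x ∈ frobFixed F n) (y : F) :
    relTrace n (x * y) = x * relTrace n y := by
  rw [relTrace, relTrace, mul_pow, mem_frobFixed.1 hx, mul_add]

lemma card_frobFixed_le (hn : n ≠ 0) : #(frobFixed F n) ≤ 2 ^ n := by
  have h1 : 1 < 2 ^ n := Nat.one_lt_two_pow hn
  calc #(frobFixed F n) ≤ (X ^ 2 ^ n - X : F[X]).natDegree :=
        card_le_degree_of_subset_roots fun x hx => by
          rw [mem_roots (FiniteField.X_pow_card_sub_X_ne_zero F h1)]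
          simp [mem_frobFixed.1 hx]
    _ = 2 ^ n := FiniteField.X_pow_card_sub_X_natDegree_eq F h1

variable [CharP F 2]

lemma add_mem_frobFixed (hx : x ∈ frobFixed F n) (hy : y ∈ frobFixed F n) :
    x + y ∈ frobFixed F n := by
  simp_all [add_pow_char_pow]

lemma relTrace_eq_zero_iff : relTrace n x = 0 ↔ x ∈ frobFixed F n := by
  rw [relTrace, CharTwo.add_eq_zero, mem_frobFixed, eq_comm]

lemma relTrace_mem (hF : Fintype.card F = 2 ^ (2 * n)) (x : F) :
    relTrace n x ∈ frobFixed F n := by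
  rw [mem_frobFixed, relTrace, add_pow_char_pow, ← pow_mul, ← pow_add, ← two_mul, ← hF,
    FiniteField.pow_card, add_comm]

lemma traceSum_sq_of_mem (hx : x ∈ frobFixed F n) : traceSum n (x ^ 2) = traceSum n x := by
  have h := traceSum_sq_add_self n x
  rwa [relTrace_eq_zero_iff.2 hx, traceSum_add, add_eq_zero_iff_eq_neg, CharTwo.neg_eq] at h

lemma traceSum_eq_zero_or_one (hx : x ∈ frobFixed F n) : traceSum n x = 0 ∨ traceSum n x = 1 :=
  IsIdempotentElem.iff_eq_zero_or_one.1 <| by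
    rw [IsIdempotentElem, ← sq, ← traceSum_sq, traceSum_sq_of_mem hx]

lemma image_relTrace_eq_and_card_frobFixed (hF : Fintype.card F = 2 ^ (2 * n)) :
    univ.image (relTrace n) = frobFixed F n ∧ #(frobFixed F n) = 2 ^ n := by
  have hsub : univ.image (relTrace n) ⊆ frobFixed F n := by
    simpa [subset_iff] using relTrace_mem hF
  -- each fibre of the additive map `relTrace n` is a translate of its kernel
  have hfibre : ∀ c ∈ univ.image (relTrace n),
      #({x ∈ (univ : Finset F) | relTrace n x = c}) ≤ #(frobFixed F n) := by
    intro c hc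
    obtain ⟨x₀, -, rfl⟩ := mem_image.1 hc
    refine card_le_card_of_injOn (· + x₀) (fun x hx => ?_) (add_left_injective x₀).injOn
    replace hx : relTrace n x = relTrace n x₀ := by simpa using hx
    rw [mem_coe, ← relTrace_eq_zero_iff, relTrace_add, hx, CharTwo.add_self_eq_zero]
  have hcard := card_le_mul_card_image (univ : Finset F) _ hfibre
  have hle := card_le_card hsub
  have hK := card_frobFixed_le (F := F) (ne_zero_of_card_eq_two_pow_two_mul hF)
  rw [card_univ, hF, pow_mul', sq] at hcard
  have hKeq : #(frobFixed F n) = 2 ^ n := by nlinarith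
  exact ⟨eq_of_subset_of_card_le hsub (by nlinarith), hKeq⟩

lemma card_frobFixed (hF : Fintype.card F = 2 ^ (2 * n)) : #(frobFixed F n) = 2 ^ n :=
  (image_relTrace_eq_and_card_frobFixed hF).2

lemma exists_relTrace_eq_one (hF : Fintype.card F = 2 ^ (2 * n)) : ∃ z : F, relTrace n z = 1 := by
  simpa [← (image_relTrace_eq_and_card_frobFixed hF).1] using one_mem_frobFixed (F := F) (n := n)

lemma sq_add_self_mem_of_relTrace_eq_one {z : F} (hz : relTrace n z = 1) :
    z ^ 2 + z ∈ frobFixed F n := by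
  rw [← relTrace_eq_zero_iff, relTrace_add, relTrace_sq, hz, one_pow, CharTwo.add_self_eq_zero]

lemma traceSign_add (hx : x ∈ frobFixed F n) (hy : y ∈ frobFixed F n) :
    traceSign n (x + y) = traceSign n x * traceSign n y := by
  unfold traceSign
  rw [traceSum_add]
  rcases traceSum_eq_zero_or_one hx with hx | hx <;>
    rcases traceSum_eq_zero_or_one hy with hy | hy <;>
    simp [hx, hy, CharTwo.add_self_eq_zero]

lemma sum_traceSign_mul (hF : Fintype.card F = 2 ^ (2 * n)) {b : F} (hb : b ∈ frobFixed F n) :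
    ∑ k ∈ frobFixed F n, traceSign n (b * k) = if b = 0 then 2 ^ n else 0 := by
  split_ifs with hb0
  · simp [hb0, traceSign_zero, card_frobFixed hF]
  obtain ⟨z, hz⟩ := exists_relTrace_eq_one hF
  set k₀ := b⁻¹ * (z ^ 2 + z)
  have hk₀ : k₀ ∈ frobFixed F n :=
    mul_mem_frobFixed (inv_mem_frobFixed hb) (sq_add_self_mem_of_relTrace_eq_one hz)
  have hbk₀ : traceSign n (b * k₀) = -1 := by
    rw [mul_inv_cancel_left₀ hb0, traceSign_of_traceSum_eq_one (by rw [traceSum_sq_add_self, hz])]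
  have hk₀0 : k₀ ≠ 0 := by
    intro h
    simp [h, traceSign_zero] at hbk₀
  refine sum_involution (fun k _ => k + k₀) (fun k hk => ?_)
    (fun k _ _ h => hk₀0 (by simpa using h)) (fun k hk => add_mem_frobFixed hk hk₀)
    (fun k _ => by simp [add_assoc, CharTwo.add_self_eq_zero])
  rw [mul_add, traceSign_add (mul_mem_frobFixed hb hk) (mul_mem_frobFixed hb hk₀), hbk₀]
  ring

lemma sum_traceSign_mul_sq_add (hF : Fintype.card F = 2 ^ (2 * n)) {c d : F}
    (hc : c ∈ frobFixed F n) (hc0 : c ≠ 0) (hd : d ∈ frobFixed F n) :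
    ∑ k ∈ frobFixed F n, traceSign n (c * (k ^ 2 + k) + d) =
      if c = 1 then 2 ^ n * traceSign n d else 0 := by
  set s := c ^ 2 ^ (n - 1)
  have hs : s ∈ frobFixed F n := pow_mem_frobFixed hc _
  have hs_sq : s ^ 2 = c := by
    rw [← pow_mul, ← pow_succ, Nat.sub_add_cancel
      (Nat.pos_of_ne_zero (ne_zero_of_card_eq_two_pow_two_mul hF)), mem_frobFixed.1 hc]
  -- `c k² = (s k)²` has the same trace as `s k`, so the summand is a character of `k`
  have hlin : ∀ k ∈ frobFixed F n,
      traceSign n (c * (k ^ 2 + k) + d) = traceSign n ((s + c) * k) * traceSign n d := by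
    intro k hk
    have hck : c * (k ^ 2 + k) = (s * k) ^ 2 + c * k := by rw [mul_pow, hs_sq]; ring
    rw [← traceSign_add (mul_mem_frobFixed (add_mem_frobFixed hs hc) hk) hd]
    simp only [traceSign, traceSum_add, hck,
      traceSum_sq_of_mem (mul_mem_frobFixed hs hk), add_mul]
  have hiff : s + c = 0 ↔ c = 1 := by
    rw [CharTwo.add_eq_zero]
    refine ⟨fun h => ?_, fun h => by simp [s, h]⟩
    exact mul_left_cancel₀ hc0 (by rw [mul_one, ← sq, ← h, hs_sq, h])
  rw [sum_congr rfl hlin, ← sum_mul, sum_traceSign_mul hF (add_mem_frobFixed hs hc)]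
  by_cases h1 : c = 1
  · rw [if_pos (hiff.2 h1), if_pos h1]
  · rw [if_neg (mt hiff.1 h1), if_neg h1, zero_mul]

lemma relTrace_cube_add_self {T w : F} (hT : T ∈ frobFixed F n) (hw : relTrace n w = 1) :
    relTrace n ((T * w) ^ 3 + T * w) = T ^ 3 * (w ^ 2 + w + 1) + T := by
  have h2 : (2 : F) = 0 := CharTwo.two_eq_zero
  have hTw : (T * w) ^ 2 ^ n = T * (w + 1) := by
    rw [relTrace] at hw
    rw [mul_pow, mem_frobFixed.1 hT]
    linear_combination T * hw - T * w * h2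
  rw [relTrace, add_pow_char_pow, pow_right_comm, hTw]
  linear_combination (T ^ 3 * (w ^ 3 + w ^ 2 + w) + T * w) * h2

lemma sum_compl_frobFixed_eq {M : Type*} [AddCommMonoid M] (hF : Fintype.card F = 2 ^ (2 * n))
    {z : F} (hz : relTrace n z = 1) (f : F → M) :
    ∑ x ∈ (frobFixed F n)ᶜ, f x =
      ∑ T ∈ (frobFixed F n).erase 0, ∑ k ∈ frobFixed F n, f (T * (z + k)) := by
  have hrel : ∀ T ∈ frobFixed F n, ∀ k ∈ frobFixed F n, relTrace n (T * (z + k)) = T := by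
    intro T hT k hk
    rw [relTrace_mul_of_mem hT, relTrace_add, hz, relTrace_eq_zero_iff.2 hk, add_zero, mul_one]
  have hrel0 : ∀ x ∈ (frobFixed F n)ᶜ, relTrace n x ≠ 0 := fun x hx => by
    rwa [Ne, relTrace_eq_zero_iff, ← mem_compl]
  have hinv :
      ∀ x ∈ (frobFixed F n)ᶜ, relTrace n x * (z + ((relTrace n x)⁻¹ * x + z)) = x :=
    fun x hx => by
      rw [add_comm _ z, ← add_assoc, CharTwo.add_self_eq_zero, zero_add,
        mul_inv_cancel_left₀ (hrel0 x hx)]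
  rw [← sum_product']
  refine sum_nbij' (fun x => (relTrace n x, (relTrace n x)⁻¹ * x + z)) (fun p => p.1 * (z + p.2))
    (fun x hx => ?_) (fun p hp => ?_) hinv (fun p hp => ?_) (fun x hx => by rw [hinv x hx])
  · have hT := relTrace_mem hF x
    refine mem_product.2 ⟨mem_erase.2 ⟨hrel0 x hx, hT⟩, ?_⟩
    rw [← relTrace_eq_zero_iff, relTrace_add, relTrace_mul_of_mem (inv_mem_frobFixed hT),
      inv_mul_cancel₀ (hrel0 x hx), hz, CharTwo.add_self_eq_zero]
  · obtain ⟨hT, hk⟩ := mem_product.1 hp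
    rw [mem_compl, ← relTrace_eq_zero_iff, hrel _ (mem_erase.1 hT).2 _ hk]
    exact (mem_erase.1 hT).1
  · obtain ⟨hT, hk⟩ := mem_product.1 hp
    rw [hrel _ (mem_erase.1 hT).2 _ hk, inv_mul_cancel_left₀ (mem_erase.1 hT).1, add_comm z,
      add_assoc, CharTwo.add_self_eq_zero, add_zero]

lemma sum_traceSign_cube_add_self_mul (hF : Fintype.card F = 2 ^ (2 * n)) {z : F}
    (hz : relTrace n z = 1) {T : F} (hT : T ∈ frobFixed F n) (hT0 : T ≠ 0) :
    ∑ k ∈ frobFixed F n, traceSign (2 * n) ((T * (z + k)) ^ 3 + T * (z + k)) =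
      if T ^ 3 = 1 then -(2 ^ n * traceSign n (1 + T)) else 0 := by
  have h2 : (2 : F) = 0 := CharTwo.two_eq_zero
  have ha := sq_add_self_mem_of_relTrace_eq_one hz
  set d := T ^ 3 * (z ^ 2 + z + 1) + T
  have hd : d ∈ frobFixed F n := add_mem_frobFixed
    (mul_mem_frobFixed (pow_mem_frobFixed hT 3) (add_mem_frobFixed ha one_mem_frobFixed)) hT
  have harg : ∀ k ∈ frobFixed F n, traceSign (2 * n) ((T * (z + k)) ^ 3 + T * (z + k)) =
      traceSign n (T ^ 3 * (k ^ 2 + k) + d) := by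
    intro k hk
    have hzk : relTrace n (z + k) = 1 := by
      rw [relTrace_add, hz, relTrace_eq_zero_iff.2 hk, add_zero]
    rw [traceSign_two_mul, relTrace_cube_add_self hT hzk]
    congr 1
    linear_combination T ^ 3 * z * k * h2
  rw [sum_congr rfl harg,
    sum_traceSign_mul_sq_add hF (pow_mem_frobFixed hT 3) (pow_ne_zero 3 hT0) hd]
  split_ifs with h1
  · have hd' : d = (z ^ 2 + z) + (1 + T) := by simp only [d, h1]; ring
    rw [hd', traceSign_add ha (add_mem_frobFixed one_mem_frobFixed hT),
      traceSign_of_traceSum_eq_one (by rw [traceSum_sq_add_self, hz])]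
    ring
  · rfl

theorem sum_traceSign_cube_add_self (hF : Fintype.card F = 2 ^ (2 * n)) :
    ∑ x : F, traceSign (2 * n) (x ^ 3 + x) =
      2 ^ n - 2 ^ n * ∑ T ∈ frobFixed F n with T ^ 3 = 1, traceSign n (1 + T) := by
  obtain ⟨z, hz⟩ := exists_relTrace_eq_one hF
  have hfixed : ∀ x ∈ frobFixed F n, traceSign (2 * n) (x ^ 3 + x) = 1 := fun x hx => by
    rw [traceSign_two_mul, relTrace_eq_zero_iff.2
      (add_mem_frobFixed (pow_mem_frobFixed hx 3) hx), traceSign_zero]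
  rw [← sum_add_sum_compl (frobFixed F n), sum_congr rfl hfixed, sum_const, card_frobFixed hF,
    sum_compl_frobFixed_eq hF hz, sum_congr rfl fun T hT =>
      sum_traceSign_cube_add_self_mul hF hz (mem_erase.1 hT).2 (mem_erase.1 hT).1,
    sum_erase _ (by simp), ← sum_filter, sum_neg_distrib, ← mul_sum]
  simp [sub_eq_add_neg]

end FixedField

lemma traceSign_eq_neg_one_pow [CharP F 2] {n j : ℕ} {x : F} (h : traceSum n x = j) :
    traceSign n x = (-1) ^ j := by
  rw [traceSign, h, CharP.cast_eq_zero_iff F 2]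
  split_ifs with hj
  · exact ((even_iff_two_dvd.2 hj).neg_one_pow).symm
  · exact ((Nat.not_even_iff_odd.1 (mt even_iff_two_dvd.1 hj)).neg_one_pow).symm

lemma neg_one_pow_trace_val [Fintype F] [Algebra (ZMod 2) F] {m : ℕ}
    (hF : Fintype.card F = 2 ^ m) (x : F) :
    (-1 : ℤ) ^ (Algebra.trace (ZMod 2) F x).val = traceSign m x := by
  have hrank : Module.finrank (ZMod 2) F = m := by
    have h := Module.card_eq_pow_finrank (K := ZMod 2) (V := F)
    rw [hF, ZMod.card] at h
    exact (Nat.pow_right_injective le_rfl h).symm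
  have h := FiniteField.algebraMap_trace_eq_sum_pow (ZMod 2) F x
  rw [hrank, Nat.card_zmod] at h
  rw [traceSign, traceSum, ← h]
  generalize Algebra.trace (ZMod 2) F x = t
  obtain rfl | rfl : t = 0 ∨ t = 1 := by decide +revert
  · simp
  · simp [ZMod.val_one]

section CubeRoots

lemma cube_eq_one_iff {T : F} : T ^ 3 = 1 ↔ T = 1 ∨ T ^ 2 + T + 1 = 0 := by
  rw [← sub_eq_zero, show T ^ 3 - 1 = (T - 1) * (T ^ 2 + T + 1) by ring, mul_eq_zero, sub_eq_zero]

lemma pow_two_pow_two_mul {ω : F} (hω : ω ^ 2 + ω + 1 = 0) (j : ℕ) :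
    ω ^ 2 ^ (2 * j) = ω := by
  induction j with
  | zero => simp
  | succ j ih =>
    rw [mul_add, pow_add, pow_mul, ih]
    linear_combination ω * (ω - 1) * hω

lemma exists_sq_add_self_add_one_eq_zero [Fintype F] [DecidableEq F] {n : ℕ}
    (hF : Fintype.card F = 2 ^ (2 * n)) :
    ∃ ω : F, ω ^ 2 + ω + 1 = 0 := by
  have h3 : 3 ∣ Fintype.card Fˣ := by
    rw [Fintype.card_units, hF, pow_mul]
    simpa using Nat.sub_dvd_pow_sub_pow 4 1 n
  obtain ⟨u, hu⟩ := exists_prime_orderOf_dvd_card 3 h3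
  refine ⟨u, (cube_eq_one_iff.1 ?_).resolve_left fun h => ?_⟩
  · rw [← Units.val_pow_eq_pow_val, ← hu, pow_orderOf_eq_one, Units.val_one]
  · rw [Units.val_eq_one.1 h, orderOf_one] at hu
    exact absurd hu (by norm_num)

variable [CharP F 2] {ω : F}

lemma sq_add_self_add_one_eq_zero_iff (hω : ω ^ 2 + ω + 1 = 0) {T : F} :
    T ^ 2 + T + 1 = 0 ↔ T = ω ∨ T = ω + 1 := by
  have h2 : (2 : F) = 0 := CharTwo.two_eq_zero
  have hfac : T ^ 2 + T + 1 = (T - ω) * (T - (ω + 1)) := by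
    linear_combination -hω + (T * (ω + 1) + 1) * h2
  rw [hfac, mul_eq_zero, sub_eq_zero, sub_eq_zero]

lemma pow_two_pow_two_mul_add_one (hω : ω ^ 2 + ω + 1 = 0) (j : ℕ) :
    ω ^ 2 ^ (2 * j + 1) = ω + 1 := by
  rw [pow_succ, pow_mul, pow_two_pow_two_mul hω]
  linear_combination hω - (ω + 1) * (CharTwo.two_eq_zero : (2 : F) = 0)

lemma traceSum_two_mul_of_sq_add_self_add_one (hω : ω ^ 2 + ω + 1 = 0) (j : ℕ) :
    traceSum (2 * j) ω = j := by
  induction j with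
  | zero => simp [traceSum]
  | succ j ih =>
    rw [show 2 * (j + 1) = 2 * j + 1 + 1 by ring, traceSum, sum_range_succ, sum_range_succ,
      ← traceSum, ih, pow_two_pow_two_mul hω, pow_two_pow_two_mul_add_one hω]
    push_cast
    linear_combination ω * (CharTwo.two_eq_zero : (2 : F) = 0)

variable [Fintype F] [DecidableEq F]

lemma filter_frobFixed_cube_eq_one_of_odd {n : ℕ} (hn : Odd n) :
    {T ∈ frobFixed F n | T ^ 3 = 1} = {1} := by
  ext T
  simp only [mem_filter, mem_singleton, mem_frobFixed]
  refine ⟨fun ⟨hT, h3⟩ => (cube_eq_one_iff.1 h3).resolve_right fun hω => ?_,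
    by rintro rfl; simp⟩
  obtain ⟨j, rfl⟩ := hn
  rw [pow_two_pow_two_mul_add_one hω] at hT
  exact one_ne_zero (add_eq_left.1 hT)

lemma filter_frobFixed_cube_eq_one_of_even (hω : ω ^ 2 + ω + 1 = 0) (j : ℕ) :
    {T ∈ frobFixed F (2 * j) | T ^ 3 = 1} = {1, ω, ω + 1} := by
  ext T
  simp only [mem_filter, mem_insert, mem_singleton, mem_frobFixed, cube_eq_one_iff,
    ← sq_add_self_add_one_eq_zero_iff hω]
  refine and_iff_right_of_imp ?_
  rintro (rfl | hT)
  · simp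
  · exact pow_two_pow_two_mul hT j

lemma sum_traceSign_one_add_of_even {j : ℕ} (hF : Fintype.card F = 2 ^ (2 * (2 * j))) :
    ∑ T ∈ frobFixed F (2 * j) with T ^ 3 = 1, traceSign (2 * j) (1 + T) = 1 + 2 * (-1) ^ j := by
  have h2 : (2 : F) = 0 := CharTwo.two_eq_zero
  obtain ⟨ω, hω⟩ := exists_sq_add_self_add_one_eq_zero hF
  have hω1 : ω ≠ 1 := by
    rintro rfl
    exact one_ne_zero (by linear_combination hω - h2)
  have hω0 : ω + 1 ≠ 1 := by
    intro h
    exact one_ne_zero (by linear_combination hω - (ω + 1) * h)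
  have htr : traceSum (2 * j) (1 + ω) = j := by
    rw [traceSum_add, traceSum_one, traceSum_two_mul_of_sq_add_self_add_one hω]
    push_cast
    linear_combination (j : F) * h2
  have htr' : traceSum (2 * j) (1 + (ω + 1)) = j := by
    rw [show 1 + (ω + 1) = ω by linear_combination h2,
      traceSum_two_mul_of_sq_add_self_add_one hω]
  rw [filter_frobFixed_cube_eq_one_of_even hω, sum_insert (by simp [hω1.symm, hω0.symm]),
    sum_insert (by simp), sum_singleton, CharTwo.add_self_eq_zero, traceSign_eq_neg_one_pow htr,
    traceSign_eq_neg_one_pow htr', traceSign_zero]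
  ring

end CubeRoots

end CharTwoTrace

open CharTwoTrace

theorem stmt8_general (m : ℕ)
    (F : Type) [Field F] [Fintype F] [Algebra (ZMod 2) F]
    (hcard : Fintype.card F = 2 ^ m) :
    (m % 4 = 2 →
      ∑ x : F, (-1 : ℤ) ^ (Algebra.trace (ZMod 2) F (x ^ 3 + x)).val = 0) ∧
    (m % 4 = 0 →
      ∑ x : F, (-1 : ℤ) ^ (Algebra.trace (ZMod 2) F (x ^ 3 + x)).val
        = -(-1 : ℤ) ^ (m / 4) * 2 ^ (m / 2 + 1)) := by
  classical
  have : CharP F 2 := charP_of_injective_algebraMap (algebraMap (ZMod 2) F).injective 2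
  simp_rw [neg_one_pow_trace_val hcard]
  refine ⟨fun hm4 => ?_, fun hm4 => ?_⟩
  · obtain ⟨n, rfl, hn⟩ : ∃ n, m = 2 * n ∧ Odd n :=
      ⟨m / 2, by omega, Nat.odd_iff.2 (by omega)⟩
    rw [sum_traceSign_cube_add_self hcard, filter_frobFixed_cube_eq_one_of_odd hn, sum_singleton,
      CharTwo.add_self_eq_zero, traceSign_zero]
    ring
  · obtain ⟨j, rfl⟩ : ∃ j, m = 2 * (2 * j) := ⟨m / 4, by omega⟩
    rw [sum_traceSign_cube_add_self hcard, sum_traceSign_one_add_of_even hcard,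
      show 2 * (2 * j) / 4 = j by omega, show 2 * (2 * j) / 2 + 1 = 2 * j + 1 by omega]
    ring

theorem stmt8 (m : ℕ) (hm : 4 ≤ m) (hme : Even m)
    (F : Type) [Field F] [Fintype F] [Algebra (ZMod 2) F]
    (hcard : Fintype.card F = 2 ^ m) :
    (m % 4 = 2 →
      ∑ x : F, (-1 : ℤ) ^ (Algebra.trace (ZMod 2) F (x ^ 3 + x)).val = 0) ∧
    (m % 4 = 0 →
      ∑ x : F, (-1 : ℤ) ^ (Algebra.trace (ZMod 2) F (x ^ 3 + x)).val
        = -(-1 : ℤ) ^ (m / 4) * 2 ^ (m / 2 + 1)) :=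
  stmt8_general m F hcard
end

section
/- Let q = 2^m with m ≥ 4 even and f(x) = x^4 + x over GF(q). Then the equation f(x) = 1 has a solution in GF(q) if and only if m ≡ 0 (mod 4). -/
open Finset Polynomial

lemma aux_card_roots {F : Type} [Field F] [Fintype F] (p : Polynomial F) (hp : p ≠ 0) :
    Nat.card {x : F // p.eval x = 0} ≤ p.natDegree := by
  classical
  have h1 : Nat.card {x : F // p.eval x = 0}
      = (Finset.univ.filter (fun x : F => p.eval x = 0)).card := by
    rw [Nat.card_eq_fintype_card, Fintype.card_subtype]
  rw [h1]
  have h2 : (Finset.univ.filter (fun x : F => p.eval x = 0)) ⊆ p.roots.toFinset := by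
    intro x hx
    rw [Multiset.mem_toFinset, Polynomial.mem_roots hp]
    simp only [mem_filter] at hx
    exact hx.2
  calc (Finset.univ.filter (fun x : F => p.eval x = 0)).card
      ≤ p.roots.toFinset.card := Finset.card_le_card h2
    _ ≤ Multiset.card p.roots := Multiset.toFinset_card_le _
    _ ≤ p.natDegree := p.card_roots'

theorem stmt9 (m : ℕ) (hm : 4 ≤ m) (hme : Even m)
    (F : Type) [Field F] [Fintype F] [Algebra (ZMod 2) F]
    (hcard : Fintype.card F = 2 ^ m) :
    (∃ x : F, x ^ 4 + x = 1) ↔ m % 4 = 0 := by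
  classical
  obtain ⟨k, hk⟩ := hme
  have hm2 : m = 2 * k := by omega
  have hk2 : 2 ≤ k := by omega
  haveI : CharP F 2 := charP_of_injective_algebraMap (algebraMap (ZMod 2) F).injective 2
  have hfrob : ∀ (x y : F) (i : ℕ), (x + y) ^ (4 : ℕ) ^ i = x ^ (4 : ℕ) ^ i + y ^ (4 : ℕ) ^ i := by
    intro x y i
    have h4 : (4 : ℕ) ^ i = 2 ^ (2 * i) := by rw [pow_mul]; norm_num
    rw [h4]
    exact add_pow_char_pow x y 2 (2 * i)
  have hadd4 : ∀ x y : F, (x + y) ^ 4 = x ^ 4 + y ^ 4 := by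
    intro x y
    have := hfrob x y 1
    simpa using this
  set g : F →+ F := AddMonoidHom.mk' (fun x => x ^ 4 + x)
    (fun x y => by
      show (x + y) ^ 4 + (x + y) = (x ^ 4 + x) + (y ^ 4 + y)
      rw [hadd4]; ring) with hg
  set t : F →+ F := AddMonoidHom.mk' (fun y => ∑ i ∈ Finset.range k, y ^ (4 : ℕ) ^ i)
    (fun x y => by
      show ∑ i ∈ Finset.range k, (x + y) ^ (4 : ℕ) ^ i
          = (∑ i ∈ Finset.range k, x ^ (4 : ℕ) ^ i) + ∑ i ∈ Finset.range k, y ^ (4 : ℕ) ^ i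
      rw [← Finset.sum_add_distrib]
      exact Finset.sum_congr rfl fun i _ => hfrob x y i) with ht
  have hgapp : ∀ x : F, g x = x ^ 4 + x := fun x => rfl
  have htapp : ∀ y : F, t y = ∑ i ∈ Finset.range k, y ^ (4 : ℕ) ^ i := fun y => rfl
  -- x ^ (4 ^ k) = x
  have hpowcard : ∀ x : F, x ^ (4 : ℕ) ^ k = x := by
    intro x
    have h4 : (4 : ℕ) ^ k = 2 ^ m := by rw [hm2, pow_mul]; norm_num
    rw [h4, ← hcard, FiniteField.pow_card]
  -- key : t ∘ g = 0
  have hkey : ∀ x : F, t (g x) = 0 := by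
    intro x
    have hterm : ∀ i : ℕ, (x ^ 4 + x) ^ (4 : ℕ) ^ i
        = x ^ (4 : ℕ) ^ (i + 1) - x ^ (4 : ℕ) ^ i := by
      intro i
      rw [CharTwo.sub_eq_add, hfrob (x ^ 4) x i, ← pow_mul, ← pow_succ']
    rw [htapp, hgapp]
    calc ∑ i ∈ Finset.range k, (x ^ 4 + x) ^ (4 : ℕ) ^ i
        = ∑ i ∈ Finset.range k, (x ^ (4 : ℕ) ^ (i + 1) - x ^ (4 : ℕ) ^ i) :=
          Finset.sum_congr rfl fun i _ => hterm i
      _ = x ^ (4 : ℕ) ^ k - x ^ (4 : ℕ) ^ 0 := Finset.sum_range_sub (fun i => x ^ (4 : ℕ) ^ i) k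
      _ = 0 := by rw [hpowcard, pow_zero, pow_one, sub_self]
  -- t 1 = (k : F)
  have ht1 : t 1 = (k : F) := by
    rw [htapp]
    simp
  have ht1iff : t (1 : F) = 0 ↔ m % 4 = 0 := by
    rw [ht1, CharP.cast_eq_zero_iff F 2 k]
    constructor
    · rintro ⟨j, rfl⟩; omega
    · intro h; exact ⟨m / 4, by omega⟩
  constructor
  · rintro ⟨x, hx⟩
    have : t 1 = 0 := by rw [← hx]; exact hkey x
    exact ht1iff.mp this
  · intro hmod
    have h1ker : (1 : F) ∈ t.ker := by
      rw [AddMonoidHom.mem_ker]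
      exact ht1iff.mpr hmod
    -- range g ≤ ker t
    have hle : g.range ≤ t.ker := by
      rintro _ ⟨x, rfl⟩
      rw [AddMonoidHom.mem_ker]
      exact hkey x
    -- card of ker g ≤ 4
    have hkerg : Nat.card g.ker ≤ 4 := by
      have hp : (X ^ 4 + X : Polynomial F) ≠ 0 := by
        intro h
        have := congrArg (fun p => Polynomial.coeff p 4) h
        simp [coeff_X_pow, coeff_X] at this
      have hdeg : (X ^ 4 + X : Polynomial F).natDegree = 4 := by
        compute_degree!
      have hequiv : Nat.card g.ker
          = Nat.card {x : F // (X ^ 4 + X : Polynomial F).eval x = 0} := by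
        apply Nat.card_congr
        apply Equiv.subtypeEquivRight
        intro x
        rw [AddMonoidHom.mem_ker, hgapp]
        simp
      have := aux_card_roots (X ^ 4 + X : Polynomial F) hp
      rw [hdeg] at this
      rw [hequiv]
      exact this
    -- card of ker t ≤ 2 ^ (m - 2)
    have hkert : Nat.card t.ker ≤ 2 ^ (m - 2) := by
      set P : Polynomial F := ∑ i ∈ Finset.range k, X ^ (4 : ℕ) ^ i with hP
      have hPeval : ∀ x : F, P.eval x = t x := by
        intro x
        rw [hP, htapp]
        simp [eval_finset_sum]
      have hPne : P ≠ 0 := by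
        intro h
        have hc : P.coeff ((4 : ℕ) ^ (k - 1)) = 1 := by
          rw [hP, finset_sum_coeff]
          have : ∀ i ∈ Finset.range k,
              (X ^ (4 : ℕ) ^ i : Polynomial F).coeff ((4 : ℕ) ^ (k - 1))
              = if i = k - 1 then 1 else 0 := by
            intro i _
            rw [coeff_X_pow]
            congr 1
            simp only [eq_iff_iff]
            constructor
            · intro h'
              exact (Nat.pow_right_injective (by norm_num : 2 ≤ 4) h').symm
            · rintro rfl; rfl
          rw [Finset.sum_congr rfl this, Finset.sum_ite_eq' (Finset.range k) (k - 1)]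
          simp [Finset.mem_range]
          omega
        rw [h] at hc
        simp at hc
      have hPdeg : P.natDegree ≤ 2 ^ (m - 2) := by
        have h4 : (4 : ℕ) ^ (k - 1) = 2 ^ (m - 2) := by
          have : (4 : ℕ) = 2 ^ 2 := by norm_num
          rw [this, ← pow_mul]
          congr 1
          omega
        rw [hP, ← h4]
        apply Polynomial.natDegree_sum_le_of_forall_le
        intro i hi
        calc (X ^ (4 : ℕ) ^ i : Polynomial F).natDegree ≤ (4 : ℕ) ^ i :=
              (Polynomial.natDegree_X_pow _).le
          _ ≤ (4 : ℕ) ^ (k - 1) := by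
              apply Nat.pow_le_pow_right (by norm_num)
              simp only [Finset.mem_range] at hi
              omega
      have hequiv : Nat.card t.ker = Nat.card {x : F // P.eval x = 0} := by
        apply Nat.card_congr
        apply Equiv.subtypeEquivRight
        intro x
        rw [AddMonoidHom.mem_ker, hPeval]
      rw [hequiv]
      exact le_trans (aux_card_roots _ hPne) hPdeg
    -- card range g ≥ 2 ^ (m - 2)
    have hcardF : Nat.card F = 2 ^ m := by rw [Nat.card_eq_fintype_card, hcard]
    have hsplit : Nat.card F = Nat.card g.range * Nat.card g.ker := by
      rw [AddSubgroup.card_eq_card_quotient_mul_card_addSubgroup g.ker]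
      congr 1
      exact Nat.card_congr (QuotientAddGroup.quotientKerEquivRange g).toEquiv
    have hrange : 2 ^ (m - 2) ≤ Nat.card g.range := by
      have h2m : (2 : ℕ) ^ m = 2 ^ (m - 2) * 4 := by
        rw [show (4 : ℕ) = 2 ^ 2 by norm_num, ← pow_add]
        congr 1
        omega
      nlinarith [hsplit, hkerg, hcardF, Nat.card_pos (α := g.range)]
    -- conclude t.ker = g.range
    have hle' : (g.range : Set F) ⊆ (t.ker : Set F) := SetLike.coe_subset_coe.mpr hle
    have hcardle : (t.ker : Set F).ncard ≤ (g.range : Set F).ncard := by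
      have e1 : (t.ker : Set F).ncard = Nat.card t.ker := by
        rw [← Nat.card_coe_set_eq, SetLike.coe_sort_coe]
      have e2 : (g.range : Set F).ncard = Nat.card g.range := by
        rw [← Nat.card_coe_set_eq, SetLike.coe_sort_coe]
      rw [e1, e2]; exact le_trans hkert hrange
    have heq := Set.eq_of_subset_of_ncard_le hle' hcardle (Set.toFinite _)
    have h1r : (1 : F) ∈ (g.range : Set F) := by rw [heq]; exact h1ker
    rw [SetLike.mem_coe, AddMonoidHom.mem_range] at h1r
    obtain ⟨x, hx⟩ := h1r
    exact ⟨x, by rw [← hgapp]; exact hx⟩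
end

section
/- Let q = 2^m with m odd, and n_0 = |{x ∈ GF(q) : Tr(x^3 + x) = 0}|. Then n_0 = 2^{m-1} + (-1)^{(m²-1)/8} · 2^{(m-1)/2}. -/
/-!
Put `S = ∑ x, (-1) ^ Tr (x³ + x)`, so that `2 n₀ = q + S`. Expanding `S²` and substituting
`y = x + t` leaves, for each `t`, a character sum that is linear in `x` once `t` is written as a
square; it vanishes unless `t⁴ = t`, i.e. `t ∈ {0, 1}` because `Tr 1 = m ≠ 0`. Hence `S² = 2q`
and `S = ±2^((m+1)/2)`. The sign comes from the elliptic curve `E : y² + y = x³ + x`: since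
`y² + y = c` has two solutions when `Tr c = 0` and none otherwise, `#E = 1 + 2 n₀ = 1 + q + S`,
and `(0, 0)` has order 5 on `E`, so `5 ∣ 1 + q + S`, which singles out one sign.
-/

open Finset WeierstrassCurve WeierstrassCurve.Affine

namespace TraceCubic

section CharTwo

variable {F : Type*} [Field F] [CharP F 2]

lemma sq_add_self_eq_iff {y z : F} : y ^ 2 + y = z ^ 2 + z ↔ y = z ∨ y = z + 1 := by
  have h2 : (2 : F) = 0 := CharTwo.two_eq_zero
  constructor
  · intro h
    have : (y + z) * (y + z + 1) = 0 := by linear_combination h + (z ^ 2 + z + y * z) * h2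
    rcases mul_eq_zero.1 this with h | h
    · left; linear_combination h - z * h2
    · right; linear_combination h - (z + 1) * h2
  · rintro (rfl | rfl)
    · rfl
    · linear_combination (z + 1) * h2

variable [Fintype F] [DecidableEq F]

lemma card_filter_sq_add_self_eq_sq_add_self (z : F) : #{y : F | y ^ 2 + y = z ^ 2 + z} = 2 := by
  have : ({y : F | y ^ 2 + y = z ^ 2 + z} : Finset F) = {z, z + 1} := by
    ext y
    simp [sq_add_self_eq_iff]
  rw [this, card_pair]
  simp

end CharTwo

/-- The curve `y² + y = x³ + x`. -/
def curve (R : Type*) [CommRing R] : WeierstrassCurve R := ⟨0, 0, 1, 1, 0⟩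

lemma curve_equation_iff {R : Type*} [CommRing R] (x y : R) :
    (curve R).toAffine.Equation x y ↔ y ^ 2 + y = x ^ 3 + x := by
  rw [equation_iff]
  simp [curve]

section Curve

variable {F : Type*} [Field F] [CharP F 2]

instance : (curve F).IsElliptic := by
  rw [isElliptic_iff]
  convert isUnit_one (M := F)
  simp only [curve, Δ, b₂, b₄, b₆, b₈]
  -- `Δ = -91 = 1 - 46 * 2`
  linear_combination (-46 : F) * CharTwo.two_eq_zero (R := F)

variable [DecidableEq F]

lemma five_nsmul_point_zero_zero (h : (curve F).toAffine.Equation 0 0) :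
    5 • Point.mk h = 0 := by
  have h2 : (2 : F) = 0 := CharTwo.two_eq_zero
  have h10 : (curve F).toAffine.Equation 1 0 := by
    rw [curve_equation_iff]; linear_combination -h2
  have hP2 : 2 • Point.mk h = Point.mk h10 := by
    have hy : (0 : F) ≠ (curve F).toAffine.negY 0 0 := by
      simp [negY, curve]
    rw [two_nsmul, Point.mk, Point.add_self_of_Y_ne hy, Point.mk, Point.some.injEq]
    have hl : (curve F).toAffine.slope 0 0 0 0 = 1 := by
      rw [slope_of_Y_ne rfl hy]; simp [negY, curve]
    rw [hl]
    simp only [addX, addY, negAddY, negY, curve]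
    exact ⟨by ring, by linear_combination -h2⟩
  have hQ2 : 2 • Point.mk h10 = -Point.mk h := by
    have hy : (0 : F) ≠ (curve F).toAffine.negY 1 0 := by
      simp [negY, curve]
    rw [two_nsmul, Point.mk, Point.add_self_of_Y_ne hy, Point.mk, Point.neg_some, Point.some.injEq]
    have hl : (curve F).toAffine.slope 1 1 0 0 = 0 := by
      rw [slope_of_Y_ne rfl hy]; simp only [negY, curve]; norm_num; linear_combination 2 * h2
    rw [hl]
    simp only [addX, addY, negAddY, negY, curve]
    exact ⟨by linear_combination -h2, by ring⟩
  rw [show 5 = 2 * 2 + 1 from rfl, add_nsmul, mul_nsmul, hP2, hQ2, one_nsmul, neg_add_cancel]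

lemma five_dvd_natCard_point : 5 ∣ Nat.card (curve F).toAffine.Point := by
  have h : (curve F).toAffine.Equation 0 0 := by rw [curve_equation_iff]; ring
  have := Fact.mk (show Nat.Prime 5 by norm_num)
  rw [← addOrderOf_eq_prime (five_nsmul_point_zero_zero h) (Point.some_ne_zero _)]
  exact addOrderOf_dvd_natCard _

lemma natCard_point_eq_one_add_sum [Fintype F] :
    Nat.card (curve F).toAffine.Point = 1 + ∑ x : F, #{y : F | y ^ 2 + y = x ^ 3 + x} := by
  rw [Nat.card_congr (curve F).toAffine.pointEquiv, WithZero, Finite.card_option, add_comm,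
    Nat.card_congr (Equiv.subtypeEquivRight fun xy : F × F => curve_equation_iff xy.1 xy.2),
    Nat.card_eq_fintype_card, Fintype.card_subtype, card_filter, Fintype.sum_prod_type]
  simp only [card_filter]

end Curve

section Trace

variable {F : Type*} [Field F] [Algebra (ZMod 2) F]

local notation "Tr" => Algebra.trace (ZMod 2) F

local instance : CharP F 2 := charP_of_injective_algebraMap' (ZMod 2) 2

noncomputable def traceChar : AddChar F ℤ where
  toFun x := if Tr x = 0 then 1 else -1
  map_zero_eq_one' := by simp
  map_add_eq_mul' a b := by
    rw [map_add]
    generalize Tr a = u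
    generalize Tr b = v
    fin_cases u <;> fin_cases v <;> rfl

lemma traceChar_apply (x : F) : traceChar x = if Tr x = 0 then 1 else -1 := rfl

lemma sum_traceChar_comp {α : Type*} [Fintype α] (f : α → F) :
    ∑ a, traceChar (f a) = 2 * (#{a | Tr (f a) = 0} : ℤ) - Fintype.card α := by
  simp only [traceChar_apply, sum_ite, sum_const]
  have := card_filter_add_card_filter_not (s := univ) (fun a => Tr (f a) = 0)
  rw [card_univ] at this
  push_cast [← this]
  ring

section Finite

variable [Finite F]

lemma trace_sq (x : F) : Tr (x ^ 2) = Tr x :=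
  Algebra.trace_eq_of_algEquiv (FiniteField.frobeniusAlgEquivOfAlgebraic (ZMod 2) F) x

lemma trace_sq_add_self (y : F) : Tr (y ^ 2 + y) = 0 := by
  rw [map_add, trace_sq, CharTwo.add_self_eq_zero]

lemma traceChar_ne_one : (traceChar : AddChar F ℤ) ≠ 1 := by
  obtain ⟨x, hx⟩ : ∃ x : F, Tr x ≠ 0 := by
    by_contra! h
    exact Algebra.trace_ne_zero (ZMod 2) F (LinearMap.ext h)
  exact AddChar.ne_one_iff.2 ⟨x, by simp [traceChar_apply, hx]⟩

lemma pow_four_eq_self_iff (h1 : Tr (1 : F) ≠ 0) {t : F} : t ^ 4 = t ↔ t = 0 ∨ t = 1 := by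
  refine ⟨fun ht => ?_, by rintro (rfl | rfl) <;> simp⟩
  have h2 : (2 : F) = 0 := CharTwo.two_eq_zero
  have : t * (t + 1) * (t ^ 2 + t + 1) = 0 := by linear_combination ht + (t ^ 3 + t ^ 2 + t) * h2
  rcases mul_eq_zero.1 this with h | h
  · rcases mul_eq_zero.1 h with h | h
    · exact .inl h
    · exact .inr (CharTwo.add_eq_zero.1 h)
  · have ht1 : t ^ 2 + t = 1 := by linear_combination h - h2
    exact absurd (ht1 ▸ trace_sq_add_self t) h1

lemma traceChar_sq_add (u v : F) : traceChar (u ^ 2 + v) = traceChar (u + v) := by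
  simp only [traceChar_apply, map_add, trace_sq]

end Finite

variable [Fintype F]

lemma trace_one_eq_of_card_eq {m : ℕ} (hcard : Fintype.card F = 2 ^ m) : Tr 1 = m := by
  have hrank : Module.finrank (ZMod 2) F = m := by
    have := (Module.card_eq_pow_finrank (K := ZMod 2) (V := F)).symm.trans hcard
    exact Nat.pow_right_injective le_rfl this
  simpa [hrank] using Algebra.trace_algebraMap (S := F) (1 : ZMod 2)

lemma two_mul_card_trace_eq_zero : 2 * #{x : F | Tr x = 0} = Fintype.card F := by
  have := sum_traceChar_comp (fun x : F => x)
  rw [AddChar.sum_eq_zero_of_ne_one traceChar_ne_one] at this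
  exact_mod_cast (sub_eq_zero.1 this.symm)

variable [DecidableEq F]

lemma image_sq_add_self :
    univ.image (fun y : F => y ^ 2 + y) = ({x : F | Tr x = 0} : Finset F) := by
  refine eq_of_subset_of_card_le ?_ ?_
  · simp [subset_iff, trace_sq_add_self]
  · have hfib := card_eq_sum_card_image (fun y : F => y ^ 2 + y) univ
    rw [sum_congr rfl (g := fun _ => 2), sum_const, smul_eq_mul, card_univ] at hfib
    · have := two_mul_card_trace_eq_zero (F := F)
      omega
    · simp only [mem_image, mem_univ, true_and, forall_exists_index]
      rintro _ z rfl
      exact card_filter_sq_add_self_eq_sq_add_self z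

lemma card_filter_sq_add_self_eq (x : F) :
    #{y : F | y ^ 2 + y = x} = if Tr x = 0 then 2 else 0 := by
  split_ifs with hx
  · obtain ⟨z, -, rfl⟩ := mem_image.1 (image_sq_add_self.ge ((mem_filter_univ x).2 hx))
    exact card_filter_sq_add_self_eq_sq_add_self z
  · rw [card_eq_zero, filter_eq_empty_iff]
    rintro y - rfl
    exact hx (trace_sq_add_self y)

lemma natCard_point_eq_one_add_two_mul_card :
    Nat.card (curve F).toAffine.Point = 1 + 2 * #{x : F | Tr (x ^ 3 + x) = 0} := by
  rw [natCard_point_eq_one_add_sum]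
  simp only [card_filter_sq_add_self_eq, sum_ite, sum_const_zero, sum_const, smul_eq_mul]
  ring

lemma sum_traceChar_mul (c : F) :
    ∑ x : F, traceChar (x * c) = if c = 0 then (Fintype.card F : ℤ) else 0 :=
  (AddChar.sum_mulShift c (AddChar.IsPrimitive.of_ne_one traceChar_ne_one)).trans
    (Nat.cast_ite ..)

lemma sum_traceChar_mul_sq_add_sq_mul (t : F) :
    ∑ x : F, traceChar (t * x ^ 2 + t ^ 2 * x) =
      if t ^ 4 = t then (Fintype.card F : ℤ) else 0 := by
  obtain ⟨s, rfl⟩ := FiniteField.isSquare_of_char_two (ringChar.eq F 2) t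
  have hx (x : F) :
      traceChar (s * s * x ^ 2 + (s * s) ^ 2 * x) = traceChar (x * (s + (s * s) ^ 2)) := by
    rw [show s * s * x ^ 2 = (s * x) ^ 2 by ring, traceChar_sq_add]
    ring_nf
  simp_rw [hx, sum_traceChar_mul, CharTwo.add_eq_zero, ← CharTwo.sq_inj (x := s), ← sq]
  simp only [← pow_mul, eq_comm]

lemma sq_sum_traceChar_cube_add_self (h1 : Tr (1 : F) ≠ 0) :
    (∑ x : F, traceChar (x ^ 3 + x)) ^ 2 = 2 * Fintype.card F := by
  have h2 : (2 : F) = 0 := CharTwo.two_eq_zero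
  have hshift (x t : F) : traceChar (x ^ 3 + x) * traceChar ((x + t) ^ 3 + (x + t)) =
      traceChar (t ^ 3 + t) * traceChar (t * x ^ 2 + t ^ 2 * x) := by
    rw [← AddChar.map_add_eq_mul, ← AddChar.map_add_eq_mul]
    congr 1
    linear_combination (x ^ 3 + x + x ^ 2 * t + x * t ^ 2) * h2
  calc (∑ x : F, traceChar (x ^ 3 + x)) ^ 2
      = ∑ x : F, ∑ t : F, traceChar (x ^ 3 + x) * traceChar ((x + t) ^ 3 + (x + t)) := by
        rw [sq, sum_mul_sum]
        exact sum_congr rfl fun x _ => (Fintype.sum_equiv (Equiv.addLeft x) _ _ fun _ => rfl).symm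
    _ = ∑ t : F, traceChar (t ^ 3 + t) * ∑ x : F, traceChar (t * x ^ 2 + t ^ 2 * x) := by
        simp_rw [hshift, mul_sum]
        exact sum_comm
    _ = ∑ t : F, traceChar (t ^ 3 + t) * if t ^ 4 = t then (Fintype.card F : ℤ) else 0 := by
        simp_rw [sum_traceChar_mul_sq_add_sq_mul]
    _ = 2 * Fintype.card F := by
        rw [Fintype.sum_eq_add 0 1 zero_ne_one]
        · simp [CharTwo.add_self_eq_zero, two_mul]
        · intro t ht
          simp [(pow_four_eq_self_iff h1).not.2 (not_or.2 ht)]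

end Trace

lemma five_dvd_one_add_two_pow_add_neg_one_pow :
    ∀ k : ℕ, (5 : ℤ) ∣ 1 + 2 ^ (2 * k + 1) + (-1) ^ (k * (k + 1) / 2) * 2 ^ (k + 1)
  | 0 | 1 | 2 | 3 => by norm_num
  | k + 4 => by
    have hsign : (k + 4) * (k + 4 + 1) / 2 = k * (k + 1) / 2 + 2 * (2 * k + 5) := by
      rw [show (k + 4) * (k + 4 + 1) = k * (k + 1) + 2 * (2 * (2 * k + 5)) by ring,
        Nat.add_mul_div_left _ _ two_pos]
    set σ : ℤ := (-1) ^ (k * (k + 1) / 2)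
    have hσ : (-1 : ℤ) ^ ((k + 4) * (k + 4 + 1) / 2) = σ := by
      rw [hsign, pow_add, pow_mul, neg_one_sq, one_pow, mul_one]
    -- `2 ^ 8 - 1 = 5 * 51` and `2 ^ 4 - 1 = 5 * 3`
    rw [hσ, show 1 + 2 ^ (2 * (k + 4) + 1) + σ * 2 ^ (k + 4 + 1) =
      1 + 2 ^ (2 * k + 1) + σ * 2 ^ (k + 1) + 5 * (51 * 2 ^ (2 * k + 1) + 3 * σ * 2 ^ (k + 1)) by
        ring]
    exact dvd_add (five_dvd_one_add_two_pow_add_neg_one_pow k) (dvd_mul_right 5 _)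

lemma eq_neg_one_pow_mul_of_sq_eq_of_five_dvd (k : ℕ) {S : ℤ} (hsq : S ^ 2 = 2 ^ (2 * k + 2))
    (h5 : (5 : ℤ) ∣ 1 + 2 ^ (2 * k + 1) + S) :
    S = (-1) ^ (k * (k + 1) / 2) * 2 ^ (k + 1) := by
  set σ : ℤ := (-1) ^ (k * (k + 1) / 2)
  have hσ : σ * σ = 1 := by rw [← pow_add, ← two_mul, pow_mul, neg_one_sq, one_pow]
  have hS : S = σ * 2 ^ (k + 1) ∨ S = -(σ * 2 ^ (k + 1)) := by
    rw [← sq_eq_sq_iff_eq_or_eq_neg, hsq]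
    linear_combination (-(2 : ℤ) ^ (2 * k + 2)) * hσ
  refine hS.resolve_right fun hneg => ?_
  have h52 : (5 : ℤ) ∣ 2 ^ (k + 2) := by
    rw [show (2 : ℤ) ^ (k + 2) =
        σ * (1 + 2 ^ (2 * k + 1) + σ * 2 ^ (k + 1) - (1 + 2 ^ (2 * k + 1) + S)) by
      linear_combination (-2 * 2 ^ (k + 1) : ℤ) * hσ + σ * hneg]
    exact (dvd_sub (five_dvd_one_add_two_pow_add_neg_one_pow k) h5).mul_left σ
  have := Int.Prime.dvd_pow' (by norm_num : Nat.Prime 5) h52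
  norm_num at this

end TraceCubic

open Finset TraceCubic

theorem stmt10 (m : ℕ) (hm : Odd m)
    (F : Type) [Field F] [Fintype F] [DecidableEq F] [Algebra (ZMod 2) F]
    (hcard : Fintype.card F = 2 ^ m) :
    ((((univ : Finset F).filter
        fun x => Algebra.trace (ZMod 2) F (x ^ 3 + x) = 0).card : ℤ))
      = 2 ^ (m - 1) + (-1 : ℤ) ^ ((m ^ 2 - 1) / 8) * 2 ^ ((m - 1) / 2) := by
  have := charP_of_injective_algebraMap' (ZMod 2) (A := F) 2
  have h1 : Algebra.trace (ZMod 2) F 1 ≠ 0 := by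
    rw [trace_one_eq_of_card_eq hcard, (ZMod.natCast_eq_one_iff_odd).2 hm]
    exact one_ne_zero
  obtain ⟨k, rfl⟩ := hm
  set N := #{x : F | Algebra.trace (ZMod 2) F (x ^ 3 + x) = 0}
  have hS := sum_traceChar_comp (fun x : F => x ^ 3 + x)
  have hsq := sq_sum_traceChar_cube_add_self h1
  have h5 : (5 : ℤ) ∣ 1 + 2 * N := by
    exact_mod_cast natCard_point_eq_one_add_two_mul_card (F := F) ▸ five_dvd_natCard_point
  rw [hcard] at hS hsq
  have hsign := eq_neg_one_pow_mul_of_sq_eq_of_five_dvd k (S := ∑ x : F, traceChar (x ^ 3 + x))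
    (by rw [hsq]; push_cast; ring) (by rw [hS]; convert h5 using 1; push_cast; ring)
  have hexp : ((2 * k + 1) ^ 2 - 1) / 8 = k * (k + 1) / 2 := by
    rw [show (2 * k + 1) ^ 2 = 4 * (k * (k + 1)) + 1 by ring]; omega
  rw [hexp, show 2 * k + 1 - 1 = 2 * k by omega, show 2 * k / 2 = k by omega]
  refine mul_left_cancel₀ (two_ne_zero (α := ℤ)) ?_
  push_cast at hS
  linear_combination hS.symm.trans hsign
end

section
/- Let m ≥ 5 be odd, q = 2^m, D = {x ∈ GF(q)* : Tr(x^3+x)=0}, n = |D|, and suppose C_D has exactly the three nonzero weights w_1 = 2^{m-2}+ε·2^{(m-3)/2}, w_2 = 2^{m-2}+(ε-1)2^{(m-3)/2}, w_3 = 2^{m-2}+(ε+1)2^{(m-3)/2} with ε = (-1)^{(m²-1)/8}, dimension m, and dual minimum distance ≥ 3. Then the Pless power moment equations A_{w_1}+A_{w_2}+A_{w_3} = 2^m - 1, Σ w_i A_{w_i} = n·2^{m-1}, Σ w_i² A_{w_i} = n(n+1)·2^{m-2} determine A_{w_1} = 2^{m-1}, A_{w_2} = 2^{m-2} + 2^{(m-3)/2}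 - (1+ε)/2, A_{w_3} = 2^{m-2} - 2^{(m-3)/2} + (ε-1)/2. -/
theorem stmt15 (m : ℕ) (hm : 5 ≤ m) (hmo : Odd m)
    (ε n w₁ w₂ w₃ A₁ A₂ A₃ : ℤ)
    (hε : ε = (-1 : ℤ) ^ ((m ^ 2 - 1) / 8))
    (hn : n = 2 ^ (m - 1) - 1 + ε * 2 ^ ((m - 1) / 2))
    (hw₁ : w₁ = 2 ^ (m - 2) + ε * 2 ^ ((m - 3) / 2))
    (hw₂ : w₂ = 2 ^ (m - 2) + (ε - 1) * 2 ^ ((m - 3) / 2))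
    (hw₃ : w₃ = 2 ^ (m - 2) + (ε + 1) * 2 ^ ((m - 3) / 2))
    (h1 : A₁ + A₂ + A₃ = 2 ^ m - 1)
    (h2 : w₁ * A₁ + w₂ * A₂ + w₃ * A₃ = n * 2 ^ (m - 1))
    (h3 : w₁ ^ 2 * A₁ + w₂ ^ 2 * A₂ + w₃ ^ 2 * A₃ = n * (n + 1) * 2 ^ (m - 2)) :
    A₁ = 2 ^ (m - 1) ∧
    A₂ = 2 ^ (m - 2) + 2 ^ ((m - 3) / 2) - (1 + ε) / 2 ∧
    A₃ = 2 ^ (m - 2) - 2 ^ ((m - 3) / 2) + (ε - 1) / 2 := by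
  obtain ⟨k, hk⟩ : ∃ k, m = 2 * k + 3 := by
    obtain ⟨j, hj⟩ := hmo; exact ⟨j - 1, by omega⟩
  set x : ℤ := 2 ^ k with hxdef
  have hx0 : (0 : ℤ) < x := pow_pos (by norm_num) k
  have hxne : x ^ 2 ≠ 0 := by positivity
  have em : (2 : ℤ) ^ m = 8 * x ^ 2 := by
    rw [hk, show 2 * k + 3 = k * 2 + 3 by ring, pow_add, pow_mul]; ring
  have em1 : (2 : ℤ) ^ (m - 1) = 4 * x ^ 2 := by
    rw [show m - 1 = k * 2 + 2 by omega, pow_add, pow_mul]; ring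
  have em2 : (2 : ℤ) ^ (m - 2) = 2 * x ^ 2 := by
    rw [show m - 2 = k * 2 + 1 by omega, pow_add, pow_mul]; ring
  have eh1 : (2 : ℤ) ^ ((m - 1) / 2) = 2 * x := by
    rw [show (m - 1) / 2 = k + 1 by omega, pow_add]; ring
  have eh3 : (2 : ℤ) ^ ((m - 3) / 2) = x := by
    rw [show (m - 3) / 2 = k by omega]
  have hεe : ε = 1 ∨ ε = -1 := by
    rw [hε]
    rcases Nat.even_or_odd ((m ^ 2 - 1) / 8) with h | h
    · left; exact h.neg_one_pow
    · right; exact h.neg_one_pow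
  rw [em1, eh1] at hn
  rw [em2, eh3] at hw₁ hw₂ hw₃
  rw [em] at h1
  rw [em1] at h2
  rw [em2] at h3
  subst hn hw₁ hw₂ hw₃
  rcases hεe with hε1 | hε1 <;> subst hε1
  · -- ε = 1 : w₁ = 2x²+x, w₂ = 2x², w₃ = 2x²+2x
    have hA3 : 2 * x ^ 2 * A₃ = 2 * x ^ 2 * (2 * x ^ 2 - x) := by
      linear_combination h3 - (4 * x ^ 2 + x) * h2 + (2 * x ^ 2 + x) * (2 * x ^ 2) * h1
    have hA2 : 2 * x ^ 2 * A₂ = 2 * x ^ 2 * (2 * x ^ 2 + x - 1) := by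
      linear_combination h3 - (4 * x ^ 2 + 3 * x) * h2
        + (2 * x ^ 2 + x) * (2 * x ^ 2 + 2 * x) * h1
    have hA1 : x ^ 2 * A₁ = x ^ 2 * (4 * x ^ 2) := by
      linear_combination -h3 + (4 * x ^ 2 + 2 * x) * h2
        - (2 * x ^ 2) * (2 * x ^ 2 + 2 * x) * h1
    have h3' := mul_left_cancel₀ (by positivity : (2 : ℤ) * x ^ 2 ≠ 0) hA3
    have h2' := mul_left_cancel₀ (by positivity : (2 : ℤ) * x ^ 2 ≠ 0) hA2
    have h1' := mul_left_cancel₀ hxne hA1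
    refine ⟨by rw [em1, h1'], ?_, ?_⟩
    · rw [em2, eh3]; omega
    · rw [em2, eh3]; omega
  · -- ε = -1 : w₁ = 2x²-x, w₂ = 2x²-2x, w₃ = 2x²
    have hA3 : 2 * x ^ 2 * A₃ = 2 * x ^ 2 * (2 * x ^ 2 - x - 1) := by
      linear_combination h3 - (4 * x ^ 2 - 3 * x) * h2
        + (2 * x ^ 2 - x) * (2 * x ^ 2 - 2 * x) * h1
    have hA2 : 2 * x ^ 2 * A₂ = 2 * x ^ 2 * (2 * x ^ 2 + x) := by
      linear_combination h3 - (4 * x ^ 2 - x) * h2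
        + (2 * x ^ 2 - x) * (2 * x ^ 2) * h1
    have hA1 : x ^ 2 * A₁ = x ^ 2 * (4 * x ^ 2) := by
      linear_combination -h3 + (4 * x ^ 2 - 2 * x) * h2
        - (2 * x ^ 2 - 2 * x) * (2 * x ^ 2) * h1
    have h3' := mul_left_cancel₀ (by positivity : (2 : ℤ) * x ^ 2 ≠ 0) hA3
    have h2' := mul_left_cancel₀ (by positivity : (2 : ℤ) * x ^ 2 ≠ 0) hA2
    have h1' := mul_left_cancel₀ hxne hA1
    refine ⟨by rw [em1, h1'], ?_, ?_⟩
    · rw [em2, eh3]; omega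
    · rw [em2, eh3]; omega
end
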